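/- arXiv:2002.05834 — 8 statements merged into one kernel-verified Lean document; each statement's English description precedes it below -/
import Mathlib

section
/- Let p be a prime and g, h nonzero polynomials in F_p[t] with Wronskian Wr(g,h) = g·h' − g'·h = 0. Then the difference of the degrees of g and h is divisible by p. -/
/-!
The coefficient of `t^(l + m - 1)` in `g h' - g' h` is `(m - l) g_l h_m`: the leading terms
contribute `m g_l h_m` and `l g_l h_m`, and all other products land in lower degrees. If the
Wronskian vanishes, this forces `m - l = 0` in `𝔽_p`.
-/

open Polynomial

namespace Polynomial

variable {R : Type*} [CommRing R]

theorem coeff_mul_derivative_natDegree_add_natDegree_sub_one (f q : R[X]) :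
    (f * derivative q).coeff (f.natDegree + q.natDegree - 1) =
      q.natDegree * (f.leadingCoeff * q.leadingCoeff) := by
  rcases Nat.eq_zero_or_pos q.natDegree with hq | hq
  · simp [derivative_of_natDegree_zero hq, hq]
  rw [Nat.add_sub_assoc hq,
    coeff_mul_add_eq_of_natDegree_le le_rfl (natDegree_derivative_le q), coeff_derivative,
    Nat.sub_add_cancel hq, Nat.cast_sub hq, Nat.cast_one, sub_add_cancel]
  simp only [leadingCoeff]
  ring

theorem coeff_wronskian_natDegree_add_natDegree_sub_one (g h : R[X]) :
    (wronskian g h).coeff (g.natDegree + h.natDegree - 1) =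
      ((h.natDegree : ℤ) - g.natDegree : ℤ) * (g.leadingCoeff * h.leadingCoeff) := by
  rw [wronskian, coeff_sub, mul_comm (derivative g),
    coeff_mul_derivative_natDegree_add_natDegree_sub_one, add_comm g.natDegree,
    coeff_mul_derivative_natDegree_add_natDegree_sub_one]
  push_cast
  ring

theorem intCast_natDegree_sub_natDegree_eq_zero_of_wronskian_eq_zero [NoZeroDivisors R]
    {g h : R[X]} (hg : g ≠ 0) (hh : h ≠ 0) (hW : wronskian g h = 0) :
    ((g.natDegree : ℤ) - h.natDegree : ℤ) = (0 : R) := by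
  have hcoeff := coeff_wronskian_natDegree_add_natDegree_sub_one g h
  rw [hW, coeff_zero, eq_comm] at hcoeff
  have hlc : g.leadingCoeff * h.leadingCoeff ≠ 0 :=
    mul_ne_zero (leadingCoeff_ne_zero.2 hg) (leadingCoeff_ne_zero.2 hh)
  rw [← neg_sub, Int.cast_neg, neg_eq_zero]
  exact (mul_eq_zero.1 hcoeff).resolve_right hlc

theorem dvd_natDegree_sub_natDegree_of_wronskian_eq_zero [NoZeroDivisors R] (p : ℕ) [CharP R p]
    {g h : R[X]} (hg : g ≠ 0) (hh : h ≠ 0) (hW : wronskian g h = 0) :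
    (p : ℤ) ∣ (g.natDegree : ℤ) - h.natDegree :=
  (CharP.intCast_eq_zero_iff R p _).1
    (intCast_natDegree_sub_natDegree_eq_zero_of_wronskian_eq_zero hg hh hW)

end Polynomial

/-- If `g, h` are nonzero polynomials over `𝔽_p` with vanishing
Wronskian `g·h' − g'·h = 0`, then `p` divides the difference of their degrees. -/
theorem stmt1 (p : ℕ) [Fact p.Prime]
    (g h : Polynomial (ZMod p)) (hg : g ≠ 0) (hh : h ≠ 0)
    (hW : g * derivative h - derivative g * h = 0) :
    (p : ℤ) ∣ ((g.natDegree : ℤ) - (h.natDegree : ℤ)) :=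
  dvd_natDegree_sub_natDegree_of_wronskian_eq_zero p hg hh hW
end

section
/- Let K be a field, z_1,...,z_n distinct elements of K, M a positive integer, and Φ(x) = ∏_{a=1}^n (x−z_a)^M. The Mn + 1 polynomials Φ(x) together with Φ(x)/(x−z_j)^m for j = 1,...,n, 1 ≤ m ≤ M, form a basis of the K-vector space of polynomials of degree at most Mn. -/
/-!
Write `Φ = ∏ a, (X - z a) ^ M` and `R j = ∏ a ≠ j, (X - z a) ^ M`, so that the `Φ / (X - z j) ^ m`
are the products `(X - z j) ^ k * R j` with `k < M`. In a vanishing linear combination, group the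
terms as `∑ j, P j * R j + c Φ` with `deg P j < M`. Modulo `(X - z j) ^ M` only `P j * R j`
survives, and `R j` is coprime to `X - z j`, so `(X - z j) ^ M ∣ P j`, hence `P j = 0`; the powers
of `X - z j` being independent, its coefficients vanish, and then `c = 0`. All `Mn + 1` polynomials
have degree at most `Mn`, so independence already makes them a basis of the polynomials of degree
`≤ Mn`.
-/

open Polynomial Finset Lagrange

section

variable {K : Type*} [Field K]

theorem linearIndependent_X_sub_C_pow (a : K) : LinearIndependent K fun k : ℕ => (X - C a) ^ k :=
  (⟨fun k => (X - C a) ^ k, fun k => by simp⟩ : Sequence K).linearIndependent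

theorem eq_zero_of_X_sub_C_pow_dvd_mul {a : K} {M : ℕ} {P R : K[X]} (hR : R.eval a ≠ 0)
    (hP : P ∈ degreeLT K M) (h : (X - C a) ^ M ∣ P * R) : P = 0 := by
  have hPdvd : (X - C a) ^ M ∣ P :=
    (prime_X_sub_C a).pow_dvd_of_dvd_mul_right M (fun h => hR (dvd_iff_isRoot.1 h)) h
  refine eq_zero_of_dvd_of_degree_lt hPdvd ?_
  simpa [degree_pow] using mem_degreeLT.1 hP

variable {ι : Type*} [Fintype ι] {z : ι → K} {M : ℕ}

theorem degree_nodal_univ_pow : (nodal univ z ^ M).degree = (M * Fintype.card ι : ℕ) := by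
  rw [degree_pow, degree_nodal, card_univ, nsmul_eq_mul, Nat.cast_mul]

variable [DecidableEq ι]

/-- Uniqueness of the numerators in a partial fraction decomposition over `∏ (X - z j) ^ M`. -/
theorem eq_zero_of_sum_mul_nodal_erase_pow_eq_zero (hz : Function.Injective z)
    {P : ι → K[X]} (hP : ∀ j, P j ∈ degreeLT K M)
    (h : ∑ j, P j * nodal (univ.erase j) z ^ M = 0) (j : ι) : P j = 0 := by
  refine eq_zero_of_X_sub_C_pow_dvd_mul (a := z j) (R := nodal (univ.erase j) z ^ M) ?_ (hP j) ?_
  · rw [eval_pow]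
    refine pow_ne_zero _ (eval_nodal_not_at_node fun a ha => ?_)
    exact fun hza => (mem_erase.1 ha).1 (hz hza).symm
  · rw [← add_sum_erase _ _ (mem_univ j), add_eq_zero_iff_eq_neg] at h
    rw [h, dvd_neg]
    refine dvd_sum fun a ha => (pow_dvd_pow_of_dvd ?_ M).mul_left _
    exact X_sub_C_dvd_nodal z (mem_erase.2 ⟨(mem_erase.1 ha).1.symm, mem_univ j⟩)

variable (z M) in
/-- `Φ / (X - z j) ^ (m + 1)` for `Φ = nodal univ z ^ M`: the index `m : Fin M` is the `m - 1`
of the informal statement. -/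
noncomputable def partialFractionFamily (jm : ι × Fin M) : K[X] :=
  (X - C (z jm.1)) ^ (M - (jm.2.1 + 1)) * nodal (univ.erase jm.1) z ^ M

theorem partialFractionFamily_mul_X_sub_C_pow (jm : ι × Fin M) :
    partialFractionFamily z M jm * (X - C (z jm.1)) ^ (jm.2.1 + 1) = nodal univ z ^ M := by
  rw [nodal_eq_mul_nodal_erase (mem_univ jm.1), mul_pow, partialFractionFamily,
    mul_right_comm, ← pow_add, Nat.sub_add_cancel jm.2.2]

theorem partialFractionFamily_mem_degreeLT (jm : ι × Fin M) :
    partialFractionFamily z M jm ∈ degreeLT K (M * Fintype.card ι) := by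
  have hmonic : (partialFractionFamily z M jm).Monic :=
    ((monic_X_sub_C _).pow _).mul (nodal_monic.pow _)
  have h := congrArg natDegree (partialFractionFamily_mul_X_sub_C_pow (z := z) jm)
  rw [hmonic.natDegree_mul ((monic_X_sub_C _).pow _), natDegree_pow, natDegree_pow,
    natDegree_X_sub_C, natDegree_nodal, card_univ] at h
  rw [mem_degreeLT, degree_eq_natDegree hmonic.ne_zero]
  exact_mod_cast (by omega : _ < M * Fintype.card ι)

theorem linearIndependent_partialFractionFamily (hz : Function.Injective z) :
    LinearIndependent K (partialFractionFamily z M) := by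
  rw [Fintype.linearIndependent_iff]
  intro c hc jm
  have hsum : ∑ j, (∑ m, c (j, m) • (X - C (z j)) ^ (M - (m.1 + 1))) *
      nodal (univ.erase j) z ^ M = 0 := by
    simpa only [Fintype.sum_prod_type, partialFractionFamily, sum_mul, smul_mul_assoc] using hc
  have hdeg (j : ι) (m : Fin M) : (X - C (z j)) ^ (M - (m.1 + 1)) ∈ degreeLT K M := by
    rw [mem_degreeLT, degree_pow, degree_X_sub_C, nsmul_one]
    exact_mod_cast (by omega : M - (m.1 + 1) < M)
  have hP := eq_zero_of_sum_mul_nodal_erase_pow_eq_zero hz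
    (fun j => Submodule.sum_mem _ fun m _ => Submodule.smul_mem _ _ (hdeg j m)) hsum jm.1
  have hrev : Function.Injective fun m : Fin M => M - (m.1 + 1) :=
    Fin.val_injective.comp Fin.rev_injective
  exact Fintype.linearIndependent_iff.1
    ((linearIndependent_X_sub_C_pow (z jm.1)).comp _ hrev) _ hP jm.2

theorem nodal_pow_notMem_span_partialFractionFamily :
    nodal univ z ^ M ∉ Submodule.span K (Set.range (partialFractionFamily z M)) := by
  intro h
  have hlt := mem_degreeLT.1 <| (Submodule.span_le.2 <| Set.range_subset_iff.2
    partialFractionFamily_mem_degreeLT) h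
  rw [degree_nodal_univ_pow] at hlt
  exact lt_irrefl _ hlt

theorem linearIndependent_option_partialFractionFamily (hz : Function.Injective z) :
    LinearIndependent K fun o => Option.casesOn' o (nodal univ z ^ M) (partialFractionFamily z M) :=
  (linearIndependent_partialFractionFamily hz).option nodal_pow_notMem_span_partialFractionFamily

theorem span_option_partialFractionFamily (hz : Function.Injective z) :
    Submodule.span K (Set.range fun o =>
      Option.casesOn' o (nodal univ z ^ M) (partialFractionFamily z M)) =
      degreeLT K (M * Fintype.card ι + 1) := by
  refine Submodule.eq_of_le_of_finrank_le (Submodule.span_le.2 <| Set.range_subset_iff.2 ?_) ?_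
  · rintro (_ | jm)
    · rw [Option.casesOn'_none, SetLike.mem_coe, mem_degreeLT, degree_nodal_univ_pow]
      exact_mod_cast Nat.lt_succ_self _
    · exact degreeLT_mono (Nat.le_succ _) (partialFractionFamily_mem_degreeLT jm)
  · rw [finrank_span_eq_card (linearIndependent_option_partialFractionFamily hz),
      Module.finrank_eq_card_basis (degreeLT.basis K _)]
    simp [mul_comm]

end

theorem stmt9_general (K : Type*) [Field K] (n M : ℕ)
    (z : Fin n → K) (hz : Function.Injective z) :
    LinearIndependent K (fun o : Option (Fin n × Fin M) =>
      Option.elim o (∏ a : Fin n, (X - C (z a)) ^ M)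
        (fun jm => (X - C (z jm.1)) ^ (M - (jm.2.1 + 1)) *
          ∏ a ∈ univ.erase jm.1, (X - C (z a)) ^ M)) ∧
    Submodule.span K (Set.range (fun o : Option (Fin n × Fin M) =>
      Option.elim o (∏ a : Fin n, (X - C (z a)) ^ M)
        (fun jm => (X - C (z jm.1)) ^ (M - (jm.2.1 + 1)) *
          ∏ a ∈ univ.erase jm.1, (X - C (z a)) ^ M)))
      = Polynomial.degreeLT K (M * n + 1) := by
  have hfamily : (fun o : Option (Fin n × Fin M) =>
      Option.elim o (∏ a : Fin n, (X - C (z a)) ^ M)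
        (fun jm => (X - C (z jm.1)) ^ (M - (jm.2.1 + 1)) *
          ∏ a ∈ univ.erase jm.1, (X - C (z a)) ^ M)) =
      fun o => Option.casesOn' o (nodal univ z ^ M) (partialFractionFamily z M) := by
    funext o
    cases o <;> simp [partialFractionFamily, nodal, prod_pow]
  rw [hfamily]
  have hspan := span_option_partialFractionFamily (M := M) hz
  rw [Fintype.card_fin] at hspan
  exact ⟨linearIndependent_option_partialFractionFamily hz, hspan⟩

/-- For distinct `z_1,…,z_n` in a field `K` and `M ≥ 1`, the
`Mn + 1` polynomials `Φ = ∏_a(x−z_a)^M` together with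
`Φ/(x−z_j)^m = (x−z_j)^{M−m}·∏_{a≠j}(x−z_a)^M`, `j = 1,…,n`, `1 ≤ m ≤ M`,
form a basis of the space of polynomials of degree ≤ Mn. -/
theorem stmt9 (K : Type*) [Field K] (n M : ℕ) (hn : 0 < n) (hM : 0 < M)
    (z : Fin n → K) (hz : Function.Injective z) :
    LinearIndependent K (fun o : Option (Fin n × Fin M) =>
      Option.elim o (∏ a : Fin n, (X - C (z a)) ^ M)
        (fun jm => (X - C (z jm.1)) ^ (M - (jm.2.1 + 1)) *
          ∏ a ∈ univ.erase jm.1, (X - C (z a)) ^ M)) ∧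
    Submodule.span K (Set.range (fun o : Option (Fin n × Fin M) =>
      Option.elim o (∏ a : Fin n, (X - C (z a)) ^ M)
        (fun jm => (X - C (z jm.1)) ^ (M - (jm.2.1 + 1)) *
          ∏ a ∈ univ.erase jm.1, (X - C (z a)) ^ M)))
      = Polynomial.degreeLT K (M * n + 1) :=
  stmt9_general K n M z hz
end

section
/- With Φ(x) = ∏_{a=1}^n (x−z_a)^M over a field in which the z_a are distinct, for each i and each m ≥ 1 the derivative of Φ(x)/(x−z_i)^m with respect to x equals (M−m)·Φ(x)/(x−z_i)^{m+1} − M·Σ_{l=1}^{m} (Σ_{j≠i} 1/(z_j−z_i)^l)·Φ(x)/(x−z_i)^{m+1−l} + M·Σ_{j≠i} (1/(z_j−z_i)^m)·Φ(x)/(x−z_j). -/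
/-!
Write `Tₐ = X - zₐ` and `Qᵢ = ∏_{a ≠ i} Tₐ^M`. The Leibniz rule turns `(Tᵢ^(M-m) Qᵢ)'` into
`(M - m) Tᵢ^(M-m-1) Qᵢ + M Σ_{j ≠ i} Tᵢ^(M-m) Qᵢ / Tⱼ`. For fixed `j`, put `d = zⱼ - zᵢ`, so that
`Tⱼ = Tᵢ - d`; then `Σ_{l=1}^m d^(-l) Tᵢ^(M-m-1+l) (Tᵢ - d) = d^(-m) Tᵢ^M - Tᵢ^(M-m)` telescopes,
and multiplying by `Qᵢ / Tⱼ` rewrites `Tᵢ^(M-m) Qᵢ / Tⱼ` as the claimed combination.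
-/

open Polynomial Finset

/-- `Φ(x)/(x−z_i)^r` as a polynomial: the exponent of `(x − z_i)` is lowered by `r`. -/
noncomputable def phiQuot {K : Type*} [Field K] (n M : ℕ) (z : Fin n → K)
    (i : Fin n) (r : ℕ) : K[X] :=
  (X - C (z i)) ^ (M - r) * ∏ a ∈ univ.erase i, (X - C (z a)) ^ M

theorem sum_range_pow_succ_mul_pow_mul_sub {R : Type*} [CommRing R] {a d : R} (had : a * d = 1)
    (T : R) (N m : ℕ) :
    ∑ k ∈ range m, a ^ (k + 1) * T ^ (N + k) * (T - d) = a ^ m * T ^ (N + m) - T ^ N := by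
  induction m with
  | zero => simp
  | succ m ih =>
    rw [sum_range_succ, ih]
    linear_combination (-(a ^ m * T ^ (N + m))) * had

section

variable {K : Type*} [Field K] {n : ℕ} (M : ℕ) (z : Fin n → K)

theorem derivative_phiQuot (i : Fin n) (m : ℕ) :
    derivative (phiQuot n M z i m) = ((M - m : ℕ) : K[X]) * phiQuot n M z i (m + 1)
      + M * ∑ j ∈ univ.erase i, (X - C (z i)) ^ (M - m) * (X - C (z j)) ^ (M - 1) *
          ∏ a ∈ (univ.erase i).erase j, (X - C (z a)) ^ M := by
  simp only [phiQuot, derivative_mul, derivative_X_sub_C_pow, derivative_prod_finset, tsub_tsub,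
    C_eq_natCast, mul_sum]
  congr 1
  · ring
  · exact sum_congr rfl fun j _ => by ring

theorem phiQuot_one_of_ne {i j : Fin n} (hji : j ≠ i) :
    phiQuot n M z j 1 = (X - C (z i)) ^ M * (X - C (z j)) ^ (M - 1) *
      ∏ a ∈ (univ.erase i).erase j, (X - C (z a)) ^ M := by
  rw [phiQuot, ← mul_prod_erase (univ.erase j) _ (mem_erase.2 ⟨hji.symm, mem_univ i⟩),
    erase_right_comm]
  ring

theorem pow_mul_prod_erase_erase_eq_sub_sum (hz : Function.Injective z) {i j : Fin n} (hji : j ≠ i)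
    (hM : 0 < M) {m : ℕ} (hm : m ≤ M) :
    (X - C (z i)) ^ (M - m) * (X - C (z j)) ^ (M - 1) *
        ∏ a ∈ (univ.erase i).erase j, (X - C (z a)) ^ M
      = C ((z j - z i) ^ m)⁻¹ * phiQuot n M z j 1
        - ∑ l ∈ Icc 1 m, C ((z j - z i) ^ l)⁻¹ * phiQuot n M z i (m + 1 - l) := by
  set d := z j - z i
  have hd : d ≠ 0 := sub_ne_zero.2 (hz.ne hji)
  set S := (X - C (z j)) ^ (M - 1) * ∏ a ∈ (univ.erase i).erase j, (X - C (z a)) ^ M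
  have hφ : ∀ r, phiQuot n M z i r = (X - C (z i)) ^ (M - r) * (X - C (z i) - C d) * S := by
    intro r
    have hpow : (X - C (z j)) ^ M = (X - C (z j)) * (X - C (z j)) ^ (M - 1) := by
      rw [← pow_succ', Nat.sub_add_cancel hM]
    rw [phiQuot, ← mul_prod_erase _ _ (mem_erase.2 ⟨hji, mem_univ j⟩), hpow, C_sub]
    ring
  have hexp : ∀ k ∈ range m, M - (m + 1 - (1 + k)) = M - m + k := fun k hk => by
    have := mem_range.1 hk
    omega
  rw [phiQuot_one_of_ne M z hji, ← Ico_add_one_right_eq_Icc, sum_Ico_eq_sum_range,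
    Nat.add_sub_cancel, sum_congr rfl fun k hk => by rw [hφ, hexp k hk]]
  have had : C d⁻¹ * C d = 1 := by rw [← C_mul, inv_mul_cancel₀ hd, C_1]
  have hsum : ∑ k ∈ range m,
        C (d ^ (1 + k))⁻¹ * ((X - C (z i)) ^ (M - m + k) * (X - C (z i) - C d) * S)
      = (∑ k ∈ range m,
          C d⁻¹ ^ (k + 1) * (X - C (z i)) ^ (M - m + k) * (X - C (z i) - C d)) * S := by
    rw [sum_mul]
    exact sum_congr rfl fun k _ => by rw [add_comm 1 k, ← inv_pow, map_pow]; ring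
  rw [hsum, sum_range_pow_succ_mul_pow_mul_sub had, Nat.sub_add_cancel hm, ← inv_pow, map_pow]
  ring

end

theorem stmt10_general (K : Type*) [Field K] (n M : ℕ) (hM : 0 < M)
    (z : Fin n → K) (hz : Function.Injective z)
    (i : Fin n) (m : ℕ) (hm2 : m ≤ M) :
    derivative (phiQuot n M z i m)
      = ((M - m : ℕ) : K[X]) * phiQuot n M z i (m + 1)
        - (M : K[X]) * ∑ l ∈ Finset.Icc 1 m,
            C (∑ j ∈ univ.erase i, ((z j - z i) ^ l)⁻¹) *
              phiQuot n M z i (m + 1 - l)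
        + (M : K[X]) * ∑ j ∈ univ.erase i,
            C (((z j - z i) ^ m)⁻¹) * phiQuot n M z j 1 := by
  rw [derivative_phiQuot, sum_congr rfl fun j hj =>
      pow_mul_prod_erase_erase_eq_sub_sum M z hz (ne_of_mem_erase hj) hM hm2,
    sum_sub_distrib, sum_comm]
  simp only [map_sum, sum_mul]
  ring

/-- For distinct `z_1,…,z_n` in a field `K`, `1 ≤ m ≤ M`,
`(Φ/(x−z_i)^m)' = (M−m)·Φ/(x−z_i)^{m+1}
  − M·Σ_{l=1}^m (Σ_{j≠i} (z_j−z_i)^{−l})·Φ/(x−z_i)^{m+1−l}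
  + M·Σ_{j≠i} (z_j−z_i)^{−m}·Φ/(x−z_j)`
(for `m = M` the first term vanishes). -/
theorem stmt10 (K : Type*) [Field K] (n M : ℕ) (hn : 0 < n) (hM : 0 < M)
    (z : Fin n → K) (hz : Function.Injective z)
    (i : Fin n) (m : ℕ) (hm1 : 1 ≤ m) (hm2 : m ≤ M) :
    derivative (phiQuot n M z i m)
      = ((M - m : ℕ) : K[X]) * phiQuot n M z i (m + 1)
        - (M : K[X]) * ∑ l ∈ Finset.Icc 1 m,
            C (∑ j ∈ univ.erase i, ((z j - z i) ^ l)⁻¹) *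
              phiQuot n M z i (m + 1 - l)
        + (M : K[X]) * ∑ j ∈ univ.erase i,
            C (((z j - z i) ^ m)⁻¹) * phiQuot n M z j 1 :=
  stmt10_general K n M hM z hz i m hm2
end

section
/- Let K be a field of characteristic 0 or characteristic p > M·n, z_1,...,z_n distinct elements, Φ(x)=∏(x−z_a)^M. For each i = 1,...,n there exist unique scalars A_{i,1},...,A_{i,M−1} ∈ K such that the polynomial Q_i(x) = Φ(x)/(x−z_i)^M + Σ_{m=1}^{M−1} A_{i,m}·Φ(x)/(x−z_i)^m has derivative (d/dx)Q_i lying in the span of the n polynomials Φ(x)/(x−z_j), j = 1,...,n. -/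
/-!
Write `g = ∏_{a ≠ i} (x - z_a)`, so that `Q_i = f · g^M` with
`f = 1 + Σ_m A_m (x - z_i)^(M-1-m)`, a polynomial of degree `< M` with `f(z_i) = 1`.
By Lagrange interpolation the span of the `Φ/(x - z_j)` consists of the multiples of
`∏_a (x - z_a)^(M-1)` of degree `< Mn`. Since `Q_i'` always has degree `< Mn` and is divisible
by `g^(M-1)`, the condition on `Q_i'` says `(x - z_i)^(M-1) ∣ (f g^M)'`, and, `1, …, M-1`
being invertible, this is `(x - z_i)^M ∣ f g^M - g^M(z_i)`. As `g(z_i) ≠ 0`, `g^M` is invertible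
modulo `(x - z_i)^M`, which determines `f` of degree `< M`; the normalisation `f(z_i) = 1` then
holds automatically.
-/

open Polynomial Finset

section Polynomial

variable {K : Type*} [Field K]

theorem natCast_ne_zero_of_le_of_ringChar {L k : ℕ} (hK : ringChar K = 0 ∨ L < ringChar K)
    (hk : 0 < k) (hkL : k ≤ L) : (k : K) ≠ 0 := by
  rw [Ne, ringChar.spec]
  intro hdvd
  rcases hK with h | h
  · rw [h, zero_dvd_iff] at hdvd
    omega
  · have := Nat.le_of_dvd hk hdvd
    omega

theorem X_pow_dvd_derivative_iff {p : K[X]} {N : ℕ} (hN : ∀ d < N, (d + 1 : K) ≠ 0) :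
    X ^ N ∣ derivative p ↔ X ^ (N + 1) ∣ p - C (p.coeff 0) := by
  simp only [X_pow_dvd_iff, coeff_derivative, coeff_sub, coeff_C]
  constructor
  · rintro h (_ | d) hd
    · simp
    · simpa [hN d (by omega)] using h d (by omega)
  · intro h d hd
    simp [show p.coeff (d + 1) = 0 by simpa using h (d + 1) (by omega)]

theorem X_sub_C_pow_dvd_derivative_iff {p : K[X]} {a : K} {N : ℕ}
    (hN : ∀ d < N, (d + 1 : K) ≠ 0) :
    (X - C a) ^ N ∣ derivative p ↔ (X - C a) ^ (N + 1) ∣ p - C (p.eval a) := by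
  have hcomp : (derivative p).comp (X + C a) = derivative (taylor a p) := by
    simp [taylor_apply, derivative_comp]
  rw [X_sub_C_pow_dvd_iff, X_sub_C_pow_dvd_iff, hcomp, X_pow_dvd_derivative_iff hN, sub_comp,
    C_comp, ← taylor_apply, taylor_coeff_zero]

theorem existsUnique_degree_lt_dvd_mul_sub {P G : K[X]} (hP : P.Monic) (hPG : IsCoprime P G)
    (H : K[X]) : ∃! F : K[X], F.degree < P.degree ∧ P ∣ F * G - H := by
  obtain ⟨u, v, huv⟩ := id hPG
  have hF₀ : P ∣ (H * v) %ₘ P * G - H := by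
    rw [modByMonic_eq_sub_mul_div]
    exact ⟨-(H * u) - (H * v /ₘ P) * G, by linear_combination H * huv⟩
  refine ⟨(H * v) %ₘ P, ⟨degree_modByMonic_lt _ hP, hF₀⟩, ?_⟩
  rintro F ⟨hF, hFdvd⟩
  have hdvd : P ∣ (F - (H * v) %ₘ P) * G := by
    simpa only [sub_sub_sub_cancel_right, ← sub_mul] using dvd_sub hFdvd hF₀
  refine sub_eq_zero.mp (eq_zero_of_dvd_of_degree_lt (hPG.dvd_of_dvd_mul_right hdvd) ?_)
  exact (degree_sub_le _ _).trans_lt (max_lt hF (degree_modByMonic_lt _ hP))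

noncomputable def expandAt (a : K) {N : ℕ} (A : Fin N → K) : K[X] :=
  1 + ∑ m : Fin N, C (A m) * (X - C a) ^ (N - m)

section expandAt

variable {N : ℕ} (a : K) (A : Fin N → K)

theorem taylor_expandAt : taylor a (expandAt a A) = expandAt 0 A := by
  simp [expandAt, taylor_mul, taylor_pow, taylor_X, taylor_C]

theorem coeff_expandAt_zero (k : ℕ) :
    (expandAt 0 A).coeff k =
      if hk : k = 0 then 1 else if hkN : k ≤ N then A ⟨N - k, by omega⟩ else 0 := by
  simp only [expandAt, map_zero, sub_zero, coeff_add, coeff_one, finsetSum_coeff, coeff_C_mul_X_pow]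
  split_ifs with hk hkN
  · rw [add_eq_left]
    exact Finset.sum_eq_zero fun m _ => if_neg (by have := m.isLt; omega)
  · rw [zero_add, Fintype.sum_eq_single ⟨N - k, by omega⟩, if_pos (by simp only; omega)]
    intro m hm
    refine if_neg fun h => hm (Fin.ext ?_)
    simp only
    omega
  · simp only [zero_add]
    exact Finset.sum_eq_zero fun m _ => if_neg (by have := m.isLt; omega)

theorem coeff_expandAt_zero_sub (m : Fin N) : (expandAt 0 A).coeff (N - m) = A m := by
  rw [coeff_expandAt_zero, dif_neg (by omega), dif_pos (by omega)]
  congr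
  omega

theorem eval_expandAt_self : (expandAt a A).eval a = 1 := by
  rw [← taylor_coeff_zero, taylor_expandAt, coeff_expandAt_zero, dif_pos rfl]

theorem natDegree_expandAt_le : (expandAt a A).natDegree ≤ N := by
  rw [← natDegree_taylor _ a, taylor_expandAt, natDegree_le_iff_coeff_eq_zero]
  intro k hk
  rw [coeff_expandAt_zero, dif_neg (by omega), dif_neg (by omega)]

theorem expandAt_injective : Function.Injective (expandAt a : (Fin N → K) → K[X]) := by
  intro A B h
  funext m
  simpa only [taylor_expandAt, coeff_expandAt_zero_sub] using
    congrArg (fun p => (taylor a p).coeff (N - m)) h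

theorem exists_expandAt_eq {f : K[X]} (hf : f.natDegree ≤ N) (hfa : f.eval a = 1) :
    ∃ A : Fin N → K, expandAt a A = f := by
  refine ⟨fun m => (taylor a f).coeff (N - m), taylor_injective a ?_⟩
  ext k
  rw [taylor_expandAt, coeff_expandAt_zero]
  split_ifs with hk hkN
  · rw [hk, taylor_coeff_zero, hfa]
  · congr 1
    dsimp only
    omega
  · rw [coeff_eq_zero_of_natDegree_lt (by rw [natDegree_taylor]; omega)]

end expandAt

theorem existsUnique_dvd_derivative_expandAt_mul {a : K} {G : K[X]} (hG : G.eval a ≠ 0)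
    {N : ℕ} (hN : ∀ d < N, (d + 1 : K) ≠ 0) :
    ∃! A : Fin N → K, (X - C a) ^ N ∣ derivative (expandAt a A * G) := by
  have hcop : IsCoprime ((X - C a) ^ (N + 1)) G :=
    ((irreducible_X_sub_C a).coprime_iff_not_dvd.2 (by rwa [dvd_iff_isRoot])).pow_left
  have hdegP : ((X - C a) ^ (N + 1)).degree = ((N + 1 : ℕ) : WithBot ℕ) := by simp
  have hcond (A : Fin N → K) : (X - C a) ^ N ∣ derivative (expandAt a A * G) ↔
      (X - C a) ^ (N + 1) ∣ expandAt a A * G - C (G.eval a) := by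
    rw [X_sub_C_pow_dvd_derivative_iff hN, eval_mul, eval_expandAt_self, one_mul]
  obtain ⟨F, ⟨hFdeg, hFdvd⟩, hFuniq⟩ :=
    existsUnique_degree_lt_dvd_mul_sub ((monic_X_sub_C a).pow (N + 1)) hcop (C (G.eval a))
  have hFa : F.eval a = 1 := by
    have hroot := (dvd_iff_isRoot.1 ((dvd_pow_self _ N.succ_ne_zero).trans hFdvd)).eq_zero
    simp only [eval_sub, eval_mul, eval_C] at hroot
    exact (mul_eq_right₀ hG).1 (sub_eq_zero.1 hroot)
  rw [hdegP] at hFdeg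
  obtain ⟨A, rfl⟩ :=
    exists_expandAt_eq a (natDegree_le_of_degree_le (Order.le_of_lt_succ hFdeg)) hFa
  refine ⟨A, (hcond A).2 hFdvd,
    fun B hB => expandAt_injective a (hFuniq _ ⟨?_, (hcond B).1 hB⟩)⟩
  rw [hdegP]
  exact degree_le_natDegree.trans_lt (Nat.cast_lt.2 (Nat.lt_succ_of_le (natDegree_expandAt_le a B)))

end Polynomial

section Lagrange

open Lagrange

variable {F ι : Type*} [Field F] [Fintype ι] [DecidableEq ι] {v : ι → F}

theorem mem_span_nodal_erase_iff (hv : Function.Injective v) {p : F[X]} :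
    p ∈ Submodule.span F (Set.range fun i => nodal (univ.erase i) v) ↔
      p.degree < Fintype.card ι := by
  constructor
  · intro hp
    have hle : Submodule.span F (Set.range fun i => nodal (univ.erase i) v) ≤
        degreeLT F (Fintype.card ι) := by
      refine Submodule.span_le.2 (Set.range_subset_iff.2 fun i => mem_degreeLT.2 ?_)
      rw [degree_nodal, card_erase_of_mem (mem_univ i), card_univ, Nat.cast_lt]
      exact Nat.sub_lt (Fintype.card_pos_iff.2 ⟨i⟩) one_pos
    exact mem_degreeLT.1 (hle hp)
  · intro hp
    rw [eq_interpolate (f := p) hv.injOn (by rwa [card_univ]),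
      interpolate_eq_nodalWeight_mul_nodal_div_X_sub_C]
    refine Submodule.sum_mem _ fun i _ => ?_
    rw [← nodal_erase_eq_nodal_div (mem_univ i), mul_right_comm, ← C_mul, ← smul_eq_C_mul]
    exact Submodule.smul_mem _ _ (Submodule.subset_span ⟨i, rfl⟩)

end Lagrange

section phiQuot

open Lagrange

variable {K : Type*} [Field K] {n M : ℕ} (z : Fin n → K)

theorem phiQuot_eq (i : Fin n) (r : ℕ) :
    phiQuot n M z i r = (X - C (z i)) ^ (M - r) * nodal (univ.erase i) z ^ M := by
  rw [phiQuot, nodal, prod_pow]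

theorem phiQuot_one_eq (hM : 0 < M) (j : Fin n) :
    phiQuot n M z j 1 = nodal univ z ^ (M - 1) * nodal (univ.erase j) z := by
  rw [phiQuot_eq, nodal_eq_mul_nodal_erase (mem_univ j), mul_pow, mul_assoc, ← pow_succ,
    Nat.sub_add_cancel hM]

theorem phiQuot_add_sum_eq (i : Fin n) (A : Fin (M - 1) → K) :
    phiQuot n M z i M + ∑ m : Fin (M - 1), C (A m) * phiQuot n M z i (m.1 + 1) =
      expandAt (z i) A * nodal (univ.erase i) z ^ M := by
  rw [expandAt, add_mul, one_mul, sum_mul, phiQuot_eq, Nat.sub_self, pow_zero, one_mul]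
  congr 1
  refine sum_congr rfl fun m _ => ?_
  rw [phiQuot_eq, mul_assoc, Nat.sub_sub, add_comm 1]

theorem mem_span_phiQuot_one_iff (hM : 0 < M) (hz : Function.Injective z) {q : K[X]} :
    q ∈ Submodule.span K (Set.range fun j => phiQuot n M z j 1) ↔
      nodal univ z ^ (M - 1) ∣ q ∧ q.degree < (M * n : ℕ) := by
  have hrange : (Set.range fun j => phiQuot n M z j 1) =
      LinearMap.mulLeft K (nodal univ z ^ (M - 1)) ''
        Set.range fun j => nodal (univ.erase j) z := by
    rw [← Set.range_comp]
    exact congrArg Set.range (funext (phiQuot_one_eq z hM))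
  have hdeg (s : K[X]) : (nodal univ z ^ (M - 1) * s).degree < (M * n : ℕ) ↔ s.degree < n := by
    rw [degree_mul, degree_eq_natDegree (nodal_monic.pow _).ne_zero, natDegree_pow, natDegree_nodal,
      card_univ, Fintype.card_fin, show M * n = (M - 1) * n + n by
        rw [← Nat.succ_mul, Nat.succ_eq_add_one, Nat.sub_add_cancel hM],
      Nat.cast_add, WithBot.add_lt_add_iff_left (WithBot.natCast_ne_bot _)]
  rw [hrange, Submodule.span_image, Submodule.mem_map]
  simp_rw [mem_span_nodal_erase_iff hz, Fintype.card_fin, LinearMap.mulLeft_apply]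
  constructor
  · rintro ⟨s, hs, rfl⟩
    exact ⟨dvd_mul_right _ _, (hdeg s).2 hs⟩
  · rintro ⟨⟨s, rfl⟩, hq⟩
    exact ⟨s, (hdeg s).1 hq, rfl⟩

theorem derivative_mem_span_phiQuot_one_iff (hM : 0 < M) (hz : Function.Injective z) (i : Fin n)
    {f : K[X]} (hf : f.natDegree ≤ M - 1) :
    derivative (f * nodal (univ.erase i) z ^ M) ∈
        Submodule.span K (Set.range fun j => phiQuot n M z j 1) ↔
      (X - C (z i)) ^ (M - 1) ∣ derivative (f * nodal (univ.erase i) z ^ M) := by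
  set g := nodal (univ.erase i) z
  have hg : g ^ (M - 1) ∣ derivative (f * g ^ M) :=
    pow_sub_one_dvd_derivative_of_pow_dvd (dvd_mul_left _ _)
  have hcop : IsCoprime ((X - C (z i)) ^ (M - 1)) (g ^ (M - 1)) :=
    (IsCoprime.prod_right fun a ha => pairwise_coprime_X_sub_C hz (ne_of_mem_erase ha).symm).pow
  have hdeg : (derivative (f * g ^ M)).degree < (M * n : ℕ) := by
    have hgdeg : g.natDegree = n - 1 := by
      rw [natDegree_nodal, card_erase_of_mem (mem_univ i), card_univ, Fintype.card_fin]
    have hfg : (f * g ^ M).natDegree ≤ M - 1 + M * (n - 1) :=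
      natDegree_mul_le.trans (add_le_add hf (natDegree_pow_le.trans (by rw [hgdeg])))
    have hMn : M - 1 + M * (n - 1) < M * n := by
      have := Nat.le_mul_of_pos_right M i.pos
      rw [Nat.mul_sub_one]
      omega
    have := natDegree_derivative_le (f * g ^ M)
    exact degree_le_natDegree.trans_lt (Nat.cast_lt.2 (by omega))
  rw [mem_span_phiQuot_one_iff z hM hz, nodal_eq_mul_nodal_erase (mem_univ i), mul_pow]
  exact ⟨fun h => (dvd_mul_right _ _).trans h.1, fun h => ⟨hcop.mul_dvd h hg, hdeg⟩⟩

end phiQuot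

theorem stmt11_general (K : Type*) [Field K] (n M : ℕ) (hM : 0 < M)
    (hchar : ringChar K = 0 ∨ M * n < ringChar K)
    (z : Fin n → K) (hz : Function.Injective z) (i : Fin n) :
    ∃! A : Fin (M - 1) → K,
      derivative (phiQuot n M z i M +
          ∑ m : Fin (M - 1), C (A m) * phiQuot n M z i (m.1 + 1))
        ∈ Submodule.span K (Set.range fun j : Fin n => phiQuot n M z j 1) := by
  have hN : ∀ d < M - 1, (d + 1 : K) ≠ 0 := fun d hd => by
    have := Nat.le_mul_of_pos_right M i.pos
    exact_mod_cast natCast_ne_zero_of_le_of_ringChar hchar d.succ_pos (by omega)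
  have hG : (Lagrange.nodal (univ.erase i) z ^ M).eval (z i) ≠ 0 := by
    rw [eval_pow]
    exact pow_ne_zero _
      (Lagrange.eval_nodal_not_at_node fun a ha => hz.ne (ne_of_mem_erase ha).symm)
  simp_rw [phiQuot_add_sum_eq,
    derivative_mem_span_phiQuot_one_iff z hM hz i (natDegree_expandAt_le _ _)]
  exact existsUnique_dvd_derivative_expandAt_mul hG hN

/-- Over a field of characteristic `0` or `p > M·n`, for each `i`
there are unique scalars `A_1, …, A_{M−1}` such that
`Q_i = Φ/(x−z_i)^M + Σ_{m=1}^{M−1} A_m·Φ/(x−z_i)^m` has derivative in the span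
of the polynomials `Φ/(x−z_j)`, `j = 1,…,n`. -/
theorem stmt11 (K : Type*) [Field K] (n M : ℕ) (hn : 0 < n) (hM : 0 < M)
    (hchar : ringChar K = 0 ∨ M * n < ringChar K)
    (z : Fin n → K) (hz : Function.Injective z) (i : Fin n) :
    ∃! A : Fin (M - 1) → K,
      derivative (phiQuot n M z i M +
          ∑ m : Fin (M - 1), C (A m) * phiQuot n M z i (m.1 + 1))
        ∈ Submodule.span K (Set.range fun j : Fin n => phiQuot n M z j 1) :=
  stmt11_general K n M hM hchar z hz i
end

section
/- With notation as above, the unique polynomial Q_i is given explicitly by Q_i(x) = Σ_{m≥0} Σ_{l_0+...+l_m = M, l_r > 0} [Φ(x)/(x−z_i)^{l_0}] · ∏_{r=1}^{m} C_{i,l_r}/(l_1+...+l_r), where C_{i,l} = Σ_{j≠i} M/(z_j−z_i)^l. -/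
/-!
Write `Φ_i = ∏_{a ≠ i} (x - z_a)^M`, so that the candidates for `Q_i` are the products `R · Φ_i`
with `deg R < M`, and `R(z_i) = 1` encodes the normalisation of the leading term.

Uniqueness: every element of the span of the `Φ/(x - z_j)` is divisible by `(x - z_i)^(M-1)`.
The difference `R` of two candidates has `R(z_i) = 0` and `deg R < M`; if `R ≠ 0`, then `R · Φ_i`
has a root of multiplicity `k ∈ [1, M-1]` at `z_i`, and since `k ≠ 0` in `K` its derivative
vanishes there to order exactly `k - 1 < M - 1`.

Existence: take `R = Σ_{k<M} H_k (x - z_i)^k`. Modulo the span, the truncated geometric expansion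
`1/(x - z_j) ≡ -Σ_e (x - z_i)^e / (z_j - z_i)^(e+1)` turns `R · Φ_i'` into
`-Σ_s (Σ_{k ≤ s} H_k C_{i,s+1-k}) (x - z_i)^s Φ_i`, which cancels `R' · Φ_i` (up to a multiple of
`Φ/(x - z_i)`) as soon as `d H_d = Σ_{k<d} H_k C_{i,d-k}` for `0 < d < M`. Splitting off the last
block of a composition shows that the sum over compositions of `d` satisfies this recursion.
-/

open Polynomial Finset

/-- `C_{i,l} = M·Σ_{j≠i} (z_j − z_i)^{−l}`. -/
noncomputable def Cil {K : Type*} [Field K] (n M : ℕ) (z : Fin n → K)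
    (i : Fin n) (l : ℕ) : K :=
  (M : K) * ∑ j ∈ univ.erase i, ((z j - z i) ^ l)⁻¹

namespace Composition

variable {β : Type*} [AddCommMonoid β]

theorem sum_blocks_eq_sum_cons {d : ℕ} (hd : 0 < d) (F : List ℕ → β) :
    ∑ c : Composition d, F c.blocks
      = ∑ l ∈ Icc 1 d, ∑ c : Composition (d - l), F (l :: c.blocks) := by
  have hcons (c : Composition d) : c.blocks.headI :: c.blocks.tail = c.blocks :=
    List.cons_head!_tail fun h => by simpa [h, hd.ne] using c.blocks_sum
  have hhead (c : Composition d) : 0 < c.blocks.headI :=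
    c.blocks_pos ((hcons c) ▸ List.mem_cons_self)
  have hsum (c : Composition d) : c.blocks.headI + c.blocks.tail.sum = d := by
    rw [← List.sum_cons, hcons, c.blocks_sum]
  rw [sum_sigma']
  refine sum_bij' (fun c _ => ⟨c.blocks.headI, ⟨c.blocks.tail,
      fun h => c.blocks_pos (List.mem_of_mem_tail h), by have := hsum c; omega⟩⟩)
    (fun p hp => ⟨p.1 :: p.2.blocks, ?_, ?_⟩) (fun c _ => ?_) (fun _ _ => mem_univ _)
    (fun c _ => Composition.ext (hcons c)) (fun _ _ => rfl) (fun c _ => by simp only [hcons])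
  · simp only [mem_sigma, mem_Icc] at hp
    rintro _ (_ | ⟨_, h⟩)
    exacts [hp.1.1, p.2.blocks_pos h]
  · simp only [mem_sigma, mem_Icc] at hp
    rw [List.sum_cons, p.2.blocks_sum]; omega
  · have := hhead c; have := hsum c
    simp only [mem_sigma, mem_Icc, mem_univ, and_true]; omega

theorem sum_blocks_reverse (d : ℕ) (F : List ℕ → β) :
    ∑ c : Composition d, F c.blocks.reverse = ∑ c : Composition d, F c.blocks :=
  Fintype.sum_bijective reverse reverse_bijective _ _ fun _ => rfl

theorem sum_blocks_eq_sum_append_singleton {d : ℕ} (hd : 0 < d) (F : List ℕ → β) :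
    ∑ c : Composition d, F c.blocks
      = ∑ l ∈ Icc 1 d, ∑ c : Composition (d - l), F (c.blocks ++ [l]) := by
  rw [← sum_blocks_reverse, sum_blocks_eq_sum_cons hd (fun bs => F bs.reverse)]
  refine sum_congr rfl fun l _ => ?_
  rw [← sum_blocks_reverse (d - l) fun bs => F (bs ++ [l])]
  simp

end Composition

theorem Finset.sum_Icc_one_eq_sum_range_sub {β : Type*} [AddCommMonoid β] (d : ℕ) (f : ℕ → β) :
    ∑ l ∈ Icc 1 d, f l = ∑ k ∈ range d, f (d - k) :=
  sum_nbij' (d - ·) (d - ·) (by simp +contextual; omega) (by simp +contextual; omega)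
    (by simp +contextual; omega) (by simp +contextual; omega)
    fun _ ha => by rw [Nat.sub_sub_self (mem_Icc.1 ha).2]

theorem List.sum_take_eq_sum_range_getD (l : List ℕ) (k : ℕ) :
    (l.take k).sum = ∑ s ∈ Finset.range k, l.getD s 0 := by
  induction l generalizing k with
  | nil => simp
  | cons a l ih =>
    cases k with
    | zero => simp
    | succ k => rw [Finset.sum_range_succ', List.take_succ_cons, List.sum_cons, ih]; simp [add_comm]

theorem List.sum_Icc_getD_cons (a : ℕ) (l : List ℕ) (k : ℕ) :
    ∑ s ∈ Finset.Icc 1 k, (a :: l).getD s 0 = (l.take k).sum := by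
  rw [← Ico_add_one_right_eq_Icc, sum_Ico_eq_sum_range, Nat.add_sub_cancel,
    List.sum_take_eq_sum_range_getD]
  simp [add_comm 1]

section CompositionWeight

variable {K : Type*} [Field K] (γ : ℕ → K)

def blocksWeight (bs : List ℕ) : K :=
  ∏ r ∈ range bs.length, γ (bs.getD r 0) * ((bs.take (r + 1)).sum : K)⁻¹

def compositionWeightSum (d : ℕ) : K :=
  ∑ c : Composition d, blocksWeight γ c.blocks

theorem blocksWeight_append_singleton (bs : List ℕ) (l : ℕ) :
    blocksWeight γ (bs ++ [l]) = blocksWeight γ bs * (γ l * ((bs.sum + l : ℕ) : K)⁻¹) := by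
  rw [blocksWeight, List.length_append, List.length_singleton, prod_range_succ, blocksWeight]
  congr 1
  · refine prod_congr rfl fun r hr => ?_
    have hr := mem_range.1 hr
    rw [List.getD_append _ _ _ _ hr, List.take_append_of_le_length hr]
  · rw [List.getD_append_right _ _ _ _ le_rfl, List.take_of_length_le (by simp)]
    simp

theorem compositionWeightSum_zero : compositionWeightSum γ 0 = 1 := by
  have (c : Composition 0) : c.blocks.length = 0 := c.blocks_length.trans (c.length_eq_zero.2 rfl)
  simp [compositionWeightSum, blocksWeight, this, composition_card]

theorem natCast_mul_compositionWeightSum {d : ℕ} (hd : (d : K) ≠ 0) :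
    d * compositionWeightSum γ d = ∑ k ∈ range d, compositionWeightSum γ k * γ (d - k) := by
  have hd' : 0 < d := Nat.pos_of_ne_zero fun h => hd (by simp [h])
  rw [compositionWeightSum, Composition.sum_blocks_eq_sum_append_singleton hd',
    sum_Icc_one_eq_sum_range_sub, mul_sum]
  refine sum_congr rfl fun k hk => ?_
  rw [Nat.sub_sub_self (mem_range.1 hk).le, compositionWeightSum, sum_mul, mul_sum]
  refine sum_congr rfl fun c _ => ?_
  rw [blocksWeight_append_singleton, c.blocks_sum, Nat.add_sub_cancel' (mem_range.1 hk).le]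
  field_simp

end CompositionWeight

theorem sum_composition_eq_sum_compositionWeightSum {K : Type*} [Field K] (γ : ℕ → K)
    (φ : ℕ → K[X]) {d : ℕ} (hd : 0 < d) :
    ∑ c : Composition d,
        C (∏ r ∈ range (c.length - 1), γ (c.blocks.getD (r + 1) 0) *
          (∑ s ∈ Icc 1 (r + 1), (c.blocks.getD s 0 : K))⁻¹) * φ (c.blocks.getD 0 0)
      = ∑ k ∈ range d, C (compositionWeightSum γ k) * φ (d - k) := by
  simp_rw [← Composition.blocks_length]
  rw [Composition.sum_blocks_eq_sum_cons hd (fun bs => C (∏ r ∈ range (bs.length - 1),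
      γ (bs.getD (r + 1) 0) * (∑ s ∈ Icc 1 (r + 1), (bs.getD s 0 : K))⁻¹) * φ (bs.getD 0 0)),
    sum_Icc_one_eq_sum_range_sub]
  refine sum_congr rfl fun k hk => ?_
  rw [Nat.sub_sub_self (mem_range.1 hk).le, compositionWeightSum, map_sum, sum_mul]
  refine sum_congr rfl fun c _ => ?_
  simp_rw [← Nat.cast_sum, List.sum_Icc_getD_cons]
  simp [blocksWeight]

section RootMultiplicity

variable {K : Type*} [Field K]

theorem not_pow_rootMultiplicity_dvd_derivative {p : K[X]} {t : K}
    (hp : (p.rootMultiplicity t : K) ≠ 0) :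
    ¬ (X - C t) ^ p.rootMultiplicity t ∣ derivative p := by
  have hp0 : p ≠ 0 := by rintro rfl; simp at hp
  obtain ⟨g, hpg, hg⟩ := p.exists_eq_pow_rootMultiplicity_mul_and_not_dvd hp0 t
  obtain ⟨j, hj⟩ := Nat.exists_eq_add_one_of_ne_zero fun h : p.rootMultiplicity t = 0 => by
    simp [h] at hp
  have hder : derivative p
      = (X - C t) ^ j * (C (p.rootMultiplicity t : K) * g + (X - C t) * derivative g) := by
    conv_lhs => rw [hpg]
    rw [derivative_mul, derivative_X_sub_C_pow, hj, Nat.add_sub_cancel]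
    ring
  rw [hder, hj, pow_succ, mul_dvd_mul_iff_left (pow_ne_zero _ (X_sub_C_ne_zero t)),
    dvd_add_left (dvd_mul_right _ _), dvd_iff_isRoot, IsRoot, eval_mul, eval_C, ← hj]
  rw [dvd_iff_isRoot] at hg
  exact mul_ne_zero hp hg

theorem eq_zero_of_pow_dvd_derivative_mul {R P : K[X]} {t : K} {M : ℕ}
    (hchar : ∀ m : ℕ, 1 ≤ m → m < M → (m : K) ≠ 0) (hdeg : R.degree < M) (hR : R.IsRoot t)
    (hP : ¬ P.IsRoot t) (hdvd : (X - C t) ^ (M - 1) ∣ derivative (R * P)) : R = 0 := by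
  by_contra hR0
  have hP0 : P ≠ 0 := by rintro rfl; exact hP (by simp)
  have hmult : (R * P).rootMultiplicity t = R.rootMultiplicity t := by
    rw [rootMultiplicity_mul (mul_ne_zero hR0 hP0), rootMultiplicity_eq_zero hP, add_zero]
  have hpos : 0 < R.rootMultiplicity t := (rootMultiplicity_pos hR0).2 hR
  have hlt : R.rootMultiplicity t < M :=
    calc R.rootMultiplicity t ≤ R.natDegree := by
          simpa using natDegree_le_of_dvd (R.pow_rootMultiplicity_dvd t) hR0
      _ < M := (natDegree_lt_iff_degree_lt hR0).2 hdeg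
  refine not_pow_rootMultiplicity_dvd_derivative (p := R * P) (t := t) ?_ ?_
  · rw [hmult]; exact hchar _ hpos hlt
  · rw [hmult]; exact (pow_dvd_pow _ (by omega)).trans hdvd

end RootMultiplicity

theorem one_add_sub_mul_sum_pow {A : Type*} [CommRing A] {u v : A} (huv : u * v = 1) (y : A)
    (N : ℕ) : 1 + (y - u) * ∑ e ∈ range N, v ^ (e + 1) * y ^ e = v ^ N * y ^ N := by
  have : (y - u) * ∑ e ∈ range N, v ^ (e + 1) * y ^ e
      = (v * y - 1) * ∑ e ∈ range N, (v * y) ^ e := by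
    rw [mul_sum, mul_sum]
    refine sum_congr rfl fun e _ => ?_
    linear_combination (-(v ^ e * y ^ e)) * huv
  rw [this, mul_geom_sum, mul_pow]
  ring

theorem X_sub_C_pow_mem_degreeLT {K : Type*} [Field K] (t : K) {k M : ℕ} (hk : k < M) :
    (X - C t) ^ k ∈ degreeLT K M := by
  rw [mem_degreeLT, degree_pow, degree_X_sub_C, nsmul_one]
  exact_mod_cast hk

/-- `Φ / (x - z_i)^M`. -/
noncomputable def phiCofactor {K : Type*} [Field K] (n M : ℕ) (z : Fin n → K) (i : Fin n) : K[X] :=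
  ∏ a ∈ univ.erase i, (X - C (z a)) ^ M

section Phi

variable {K : Type*} [Field K] {n M : ℕ} {z : Fin n → K} {i j : Fin n}

theorem phiQuot_eq_mul_phiCofactor (r : ℕ) :
    phiQuot n M z i r = (X - C (z i)) ^ (M - r) * phiCofactor n M z i := rfl

theorem not_isRoot_phiCofactor (hz : Function.Injective z) :
    ¬ (phiCofactor n M z i).IsRoot (z i) := by
  simp [phiCofactor, IsRoot, eval_prod, prod_eq_zero_iff, sub_eq_zero, hz.eq_iff]

theorem X_sub_C_pow_dvd_of_mem_span {F : K[X]}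
    (hF : F ∈ Submodule.span K (Set.range fun j => phiQuot n M z j 1)) :
    (X - C (z i)) ^ (M - 1) ∣ F := by
  suffices Submodule.span K (Set.range fun j => phiQuot n M z j 1)
      ≤ (Ideal.span {(X - C (z i)) ^ (M - 1)}).restrictScalars K from
    Ideal.mem_span_singleton.1 (this hF)
  refine Submodule.span_le.2 ?_
  rintro _ ⟨j, rfl⟩
  rw [SetLike.mem_coe, Submodule.restrictScalars_mem, Ideal.mem_span_singleton]
  by_cases hji : j = i
  · subst hji; exact dvd_mul_right _ _
  · refine (pow_dvd_pow _ (Nat.sub_le M 1)).trans (Dvd.dvd.mul_left ?_ _)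
    exact dvd_prod_of_mem (fun a => (X - C (z a)) ^ M) (mem_erase.2 ⟨Ne.symm hji, mem_univ i⟩)

theorem derivative_phiCofactor :
    derivative (phiCofactor n M z i) = ∑ j ∈ univ.erase i,
      C (M : K) * ((X - C (z j)) ^ (M - 1) * ∏ a ∈ (univ.erase i).erase j, (X - C (z a)) ^ M) := by
  rw [phiCofactor, derivative_prod_finset]
  refine sum_congr rfl fun j _ => ?_
  rw [derivative_X_sub_C_pow]
  ring

/-- Multiply the truncated expansion `1/(x - z_j) ≈ -Σ_{e<M-k} (x - z_i)^e / (z_j - z_i)^(e+1)`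
by `Φ · (x - z_i)^k / (x - z_i)^M`. -/
theorem pow_mul_add_sum_eq_C_mul_phiQuot (hz : Function.Injective z) (hj : j ∈ univ.erase i)
    {k : ℕ} (hk : k < M) :
    (X - C (z i)) ^ k * ((X - C (z j)) ^ (M - 1) * ∏ a ∈ (univ.erase i).erase j, (X - C (z a)) ^ M)
      + ∑ e ∈ range (M - k),
          C (((z j - z i) ^ (e + 1))⁻¹) * ((X - C (z i)) ^ (k + e) * phiCofactor n M z i)
      = C (((z j - z i) ^ (M - k))⁻¹) * phiQuot n M z j 1 := by
  set R := ∏ a ∈ (univ.erase i).erase j, (X - C (z a)) ^ M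
  have hw : z j - z i ≠ 0 := sub_ne_zero.2 (hz.ne (mem_erase.1 hj).1)
  have key := one_add_sub_mul_sum_pow (u := C (z j - z i)) (v := C (z j - z i)⁻¹)
    (by rw [← C_mul, mul_inv_cancel₀ hw, C_1]) (X - C (z i)) (M - k)
  rw [show X - C (z i) - C (z j - z i) = X - C (z j) by rw [C_sub]; ring] at key
  have hP : phiCofactor n M z i = (X - C (z j)) ^ M * R := (mul_prod_erase _ _ hj).symm
  have hQ : phiQuot n M z j 1 = (X - C (z j)) ^ (M - 1) * ((X - C (z i)) ^ M * R) := by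
    rw [phiQuot, ← mul_prod_erase _ _ (mem_erase.2 ⟨(mem_erase.1 hj).1.symm, mem_univ i⟩),
      erase_right_comm]
  have hM : (X - C (z j)) ^ M = (X - C (z j)) ^ (M - 1) * (X - C (z j)) := by
    rw [← pow_succ, Nat.sub_add_cancel (by omega)]
  have hY : (X - C (z i)) ^ M = (X - C (z i)) ^ k * (X - C (z i)) ^ (M - k) := by
    rw [← pow_add, Nat.add_sub_cancel' hk.le]
  calc _ = (X - C (z i)) ^ k * ((X - C (z j)) ^ (M - 1) * R) * (1 + (X - C (z j)) *
        ∑ e ∈ range (M - k), C (z j - z i)⁻¹ ^ (e + 1) * (X - C (z i)) ^ e) := by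
        rw [mul_add, mul_one, mul_sum, mul_sum, hP, hM]
        refine congrArg (_ + ·) (sum_congr rfl fun e _ => ?_)
        rw [← inv_pow, map_pow, pow_add]
        ring
    _ = _ := by
        rw [key, hQ, hY, ← inv_pow, map_pow]
        ring

/-- The terms of degree `< M` in `x - z_i` of `(Σ_k H_k (x - z_i)^k) · (Σ_l C_{i,l+1} (x - z_i)^l)`,
times `Φ / (x - z_i)^M`. -/
noncomputable def truncatedCilProduct (n M : ℕ) (z : Fin n → K) (i : Fin n) (H : ℕ → K) : K[X] :=
  ∑ k ∈ range M, ∑ e ∈ range (M - k),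
    C (H k * Cil n M z i (e + 1)) * ((X - C (z i)) ^ (k + e) * phiCofactor n M z i)

theorem truncatedCilProduct_eq (H : ℕ → K) :
    truncatedCilProduct n M z i H = ∑ s ∈ range M,
      C (∑ k ∈ range (s + 1), H k * Cil n M z i (s + 1 - k)) *
        ((X - C (z i)) ^ s * phiCofactor n M z i) := by
  rw [truncatedCilProduct, ← sum_range_diag_flip M fun k e =>
    C (H k * Cil n M z i (e + 1)) * ((X - C (z i)) ^ (k + e) * phiCofactor n M z i)]
  refine sum_congr rfl fun s _ => ?_
  rw [map_sum, sum_mul]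
  refine sum_congr rfl fun k hk => ?_
  have hk := mem_range_succ_iff.1 hk
  rw [Nat.add_sub_cancel' hk, Nat.sub_add_comm hk]

theorem mul_derivative_phiCofactor_add_truncatedCilProduct_mem_span
    (hz : Function.Injective z) (H : ℕ → K) :
    (∑ k ∈ range M, C (H k) * (X - C (z i)) ^ k) * derivative (phiCofactor n M z i)
        + truncatedCilProduct n M z i H
      ∈ Submodule.span K (Set.range fun j => phiQuot n M z j 1) := by
  have : (∑ k ∈ range M, C (H k) * (X - C (z i)) ^ k) * derivative (phiCofactor n M z i)
        + truncatedCilProduct n M z i H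
      = ∑ k ∈ range M, ∑ j ∈ univ.erase i,
          C (M * H k * ((z j - z i) ^ (M - k))⁻¹) * phiQuot n M z j 1 := by
    rw [derivative_phiCofactor, truncatedCilProduct, sum_mul, ← sum_add_distrib]
    refine sum_congr rfl fun k hk => ?_
    calc _ = ∑ j ∈ univ.erase i, C (M * H k) * ((X - C (z i)) ^ k *
            ((X - C (z j)) ^ (M - 1) * ∏ a ∈ (univ.erase i).erase j, (X - C (z a)) ^ M)
          + ∑ e ∈ range (M - k), C (((z j - z i) ^ (e + 1))⁻¹) *
              ((X - C (z i)) ^ (k + e) * phiCofactor n M z i)) := by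
          simp only [mul_add, sum_add_distrib, mul_sum]
          congr 1
          · exact sum_congr rfl fun j _ => by simp only [map_mul]; ring
          · rw [sum_comm]
            refine sum_congr rfl fun e _ => ?_
            simp only [Cil, mul_sum, map_sum, sum_mul]
            exact sum_congr rfl fun j _ => by simp only [map_mul]; ring
      _ = _ := sum_congr rfl fun j hj => by
          rw [pow_mul_add_sum_eq_C_mul_phiQuot hz hj (mem_range.1 hk), ← mul_assoc, ← C_mul]
  rw [this]
  refine sum_mem fun k _ => sum_mem fun j _ => ?_
  rw [C_mul']
  exact Submodule.smul_mem _ _ (Submodule.subset_span ⟨j, rfl⟩)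

theorem derivative_sum_mul_phiCofactor_sub_truncatedCilProduct_mem_span (H : ℕ → K)
    (hH : ∀ d, 0 < d → d < M → (d : K) * H d = ∑ k ∈ range d, H k * Cil n M z i (d - k)) :
    derivative (∑ k ∈ range M, C (H k) * (X - C (z i)) ^ k) * phiCofactor n M z i
        - truncatedCilProduct n M z i H
      ∈ Submodule.span K (Set.range fun j => phiQuot n M z j 1) := by
  rcases M with _ | N
  · simp [truncatedCilProduct]
  have hG : derivative (∑ k ∈ range (N + 1), C (H k) * (X - C (z i)) ^ k)
      = ∑ s ∈ range N, C (((s + 1 : ℕ) : K) * H (s + 1)) * (X - C (z i)) ^ s := by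
    rw [derivative_sum, sum_range_succ']
    simp only [derivative_C_mul, derivative_X_sub_C_pow, Nat.add_sub_cancel, Nat.cast_zero,
      map_zero, zero_mul, mul_zero, add_zero, map_mul]
    exact sum_congr rfl fun s _ => by ring
  rw [hG, truncatedCilProduct_eq, sum_range_succ, sum_mul, ← sub_sub, ← sum_sub_distrib,
    sum_eq_zero fun s hs => ?_, zero_sub, C_mul']
  · exact neg_mem (Submodule.smul_mem _ _ (Submodule.subset_span ⟨i, rfl⟩))
  rw [hH (s + 1) s.succ_pos (by simpa using hs), mul_assoc, sub_self]

theorem derivative_sum_mul_phiCofactor_mem_span (hz : Function.Injective z) (H : ℕ → K)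
    (hH : ∀ d, 0 < d → d < M → (d : K) * H d = ∑ k ∈ range d, H k * Cil n M z i (d - k)) :
    derivative ((∑ k ∈ range M, C (H k) * (X - C (z i)) ^ k) * phiCofactor n M z i)
      ∈ Submodule.span K (Set.range fun j => phiQuot n M z j 1) := by
  rw [derivative_mul]
  convert add_mem (derivative_sum_mul_phiCofactor_sub_truncatedCilProduct_mem_span H hH)
    (mul_derivative_phiCofactor_add_truncatedCilProduct_mem_span hz H) using 1
  ring

end Phi

theorem stmt12_general (K : Type*) [Field K] (n M : ℕ) (hM : 0 < M)
    (hchar : ∀ m : ℕ, 1 ≤ m → m ≤ M → (m : K) ≠ 0)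
    (z : Fin n → K) (hz : Function.Injective z) (i : Fin n)
    (A : Fin (M - 1) → K)
    (hA : derivative (phiQuot n M z i M +
        ∑ m : Fin (M - 1), C (A m) * phiQuot n M z i (m.1 + 1))
      ∈ Submodule.span K (Set.range fun j : Fin n => phiQuot n M z j 1)) :
    phiQuot n M z i M +
        ∑ m : Fin (M - 1), C (A m) * phiQuot n M z i (m.1 + 1)
      = ∑ c : Composition M,
          C (∏ r ∈ Finset.range (c.length - 1),
              Cil n M z i (c.blocks.getD (r + 1) 0) *
                ((∑ s ∈ Finset.Icc 1 (r + 1), (c.blocks.getD s 0 : K)))⁻¹) *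
            phiQuot n M z i (c.blocks.getD 0 0) := by
  set H := compositionWeightSum (Cil n M z i)
  set L := 1 + ∑ m : Fin (M - 1), C (A m) * (X - C (z i)) ^ (M - (m.1 + 1))
  set G := ∑ k ∈ range M, C (H k) * (X - C (z i)) ^ k
  have hL : phiQuot n M z i M + ∑ m : Fin (M - 1), C (A m) * phiQuot n M z i (m.1 + 1)
      = L * phiCofactor n M z i := by
    simp only [L, phiQuot_eq_mul_phiCofactor, Nat.sub_self, pow_zero, add_mul, one_mul, sum_mul,
      mul_assoc]
  have hG : ∑ k ∈ range M, C (H k) * phiQuot n M z i (M - k) = G * phiCofactor n M z i := by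
    rw [sum_mul]
    refine sum_congr rfl fun k hk => ?_
    rw [phiQuot_eq_mul_phiCofactor, Nat.sub_sub_self (mem_range.1 hk).le, mul_assoc]
  rw [hL] at hA ⊢
  rw [sum_composition_eq_sum_compositionWeightSum _ _ hM, hG, ← sub_eq_zero, ← sub_mul]
  suffices L - G = 0 by rw [this, zero_mul]
  refine eq_zero_of_pow_dvd_derivative_mul (fun m h1 h2 => hchar m h1 h2.le) ?_ ?_
    (not_isRoot_phiCofactor (M := M) (i := i) hz) ?_
  · refine mem_degreeLT.1 (sub_mem (add_mem (by simpa using X_sub_C_pow_mem_degreeLT (z i) hM)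
      (sum_mem fun m _ => ?_)) (sum_mem fun k hk => ?_)) <;>
      rw [C_mul'] <;> refine Submodule.smul_mem _ _ (X_sub_C_pow_mem_degreeLT (z i) ?_)
    exacts [by omega, mem_range.1 hk]
  · simp only [L, G, IsRoot, eval_sub, eval_add, eval_one, eval_finsetSum, eval_mul, eval_C,
      eval_pow, eval_X, sub_self]
    rw [sum_eq_zero fun m _ => by rw [zero_pow (by omega), mul_zero],
      sum_eq_single_of_mem 0 (mem_range.2 hM) fun k _ hk => by rw [zero_pow hk, mul_zero]]
    simp [H, compositionWeightSum_zero]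
  · refine X_sub_C_pow_dvd_of_mem_span ?_
    rw [sub_mul, derivative_sub]
    exact sub_mem hA (derivative_sum_mul_phiCofactor_mem_span hz H fun d hd hdM =>
      natCast_mul_compositionWeightSum _ (hchar d hd hdM.le))

/-- the unique polynomial
`Q_i = Φ/(x−z_i)^M + Σ_{m=1}^{M−1} A_m·Φ/(x−z_i)^m` whose derivative lies in
the span of the `Φ/(x−z_j)` is given explicitly by the sum over all
compositions `(l_0,…,l_m)` of `M` of
`Φ/(x−z_i)^{l_0} · ∏_{r=1}^m C_{i,l_r}/(l_1+⋯+l_r)`. -/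
theorem stmt12 (K : Type*) [Field K] (n M : ℕ) (hn : 0 < n) (hM : 0 < M)
    (hchar : ∀ m : ℕ, 1 ≤ m → m ≤ M → (m : K) ≠ 0)
    (z : Fin n → K) (hz : Function.Injective z) (i : Fin n)
    (A : Fin (M - 1) → K)
    (hA : derivative (phiQuot n M z i M +
        ∑ m : Fin (M - 1), C (A m) * phiQuot n M z i (m.1 + 1))
      ∈ Submodule.span K (Set.range fun j : Fin n => phiQuot n M z j 1)) :
    phiQuot n M z i M +
        ∑ m : Fin (M - 1), C (A m) * phiQuot n M z i (m.1 + 1)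
      = ∑ c : Composition M,
          C (∏ r ∈ Finset.range (c.length - 1),
              Cil n M z i (c.blocks.getD (r + 1) 0) *
                ((∑ s ∈ Finset.Icc 1 (r + 1), (c.blocks.getD s 0 : K)))⁻¹) *
            phiQuot n M z i (c.blocks.getD 0 0) :=
  stmt12_general K n M hM hchar z hz i A hA
end

section
/- Suppose F(x) is a polynomial of degree at most Mn over a field K (with z_1,...,z_n distinct and 1,...,M invertible in K) whose derivative dF/dx equals Σ_{j=1}^n A_j·Φ(x)/(x−z_j) for some scalars A_j ∈ K. Then there exist unique scalars D_0, D_1,...,D_n ∈ K with F(x) = D_0·Φ(x) + Σ_{j=1}^n D_j·Q_j(x), where Q_j are the polynomials from the preceding lemma. -/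
open Polynomial Finset

/-!
Each `Q_j` has degree `< Mn`, vanishes at `z_i` for `i ≠ j` and takes the value
`w_j = ∏_{a ≠ j} (z_j - z_a)^M ≠ 0` at `z_j`, while `Φ` vanishes at every `z_i`. So in
`D_0 Φ + Σ D_j Q_j` the coefficient of `x^{Mn}` is `D_0` and the value at `z_i` is `D_i w_i`,
which gives uniqueness and dictates the candidate `D`'s. For these, `G = F - D_0 Φ - Σ D_j Q_j`
has degree `< Mn`, vanishes at every `z_i`, and `G'` is a combination of the `Φ/(x - z_i)`, hence
divisible by `(x - z_i)^{M-1}`. Because `1, …, M` are invertible, comparing Taylor coefficients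
at `z_i` upgrades this to `(x - z_i)^M ∣ G`; so `Φ ∣ G` and `G = 0`.
-/

theorem derivative_taylor {R : Type*} [CommSemiring R] (r : R) (f : R[X]) :
    derivative (taylor r f) = taylor r (derivative f) := by
  simp [taylor_apply, derivative_comp]

section RootOfDerivative

variable {R : Type*} [CommRing R] [NoZeroDivisors R] {M : ℕ}

theorem X_pow_dvd_of_X_pow_pred_dvd_derivative
    (hM : ∀ m : ℕ, 1 ≤ m → m ≤ M → (m : R) ≠ 0) {g : R[X]} (hg' : X ^ (M - 1) ∣ derivative g)
    (hg : g.coeff 0 = 0) : X ^ M ∣ g := by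
  rw [X_pow_dvd_iff] at hg' ⊢
  rintro (_ | k) hk
  · exact hg
  · have h := hg' k (by omega)
    rw [coeff_derivative] at h
    exact (mul_eq_zero.1 h).resolve_right (by exact_mod_cast hM (k + 1) (by omega) hk.le)

theorem X_sub_C_pow_dvd_of_dvd_derivative (hM : ∀ m : ℕ, 1 ≤ m → m ≤ M → (m : R) ≠ 0)
    {c : R} {g : R[X]} (hg' : (X - C c) ^ (M - 1) ∣ derivative g) (hg : g.eval c = 0) :
    (X - C c) ^ M ∣ g := by
  have hX : taylor c (X - C c) = X := by simp [taylor_apply]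
  rw [← map_dvd_iff (taylorEquiv c), map_pow]
  change taylor c (X - C c) ^ M ∣ taylor c g
  rw [hX]
  refine X_pow_dvd_of_X_pow_pred_dvd_derivative hM ?_ (by rwa [taylor_coeff_zero])
  have := map_dvd (taylorEquiv c) hg'
  change taylor c ((X - C c) ^ (M - 1)) ∣ taylor c (derivative g) at this
  rwa [taylor_pow, hX, ← derivative_taylor] at this

end RootOfDerivative

theorem dvd_of_mem_span {R A ι : Type*} [CommSemiring R] [CommSemiring A] [Module R A]
    [IsScalarTower R A A] {a b : A} {f : ι → A} (hf : ∀ i, a ∣ f i)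
    (hb : b ∈ Submodule.span R (Set.range f)) : a ∣ b := by
  have hspan : Submodule.span R (Set.range f) ≤ (Ideal.span {a}).restrictScalars R :=
    Submodule.span_le.2 <| Set.range_subset_iff.2 fun i => Ideal.mem_span_singleton.2 (hf i)
  exact Ideal.mem_span_singleton.1 (hspan hb)

theorem Polynomial.C_mul_mem {R : Type*} [CommSemiring R] {S : Submodule R R[X]} (a : R)
    {p : R[X]} (hp : p ∈ S) : C a * p ∈ S := by
  rw [← smul_eq_C_mul]
  exact S.smul_mem a hp

theorem sub_C_coeff_mul_mem_degreeLT {R : Type*} [Ring R] {N : ℕ} {F P : R[X]}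
    (hF : F.degree ≤ N) (hP : P.Monic) (hPN : P.natDegree = N) :
    F - C (F.coeff N) * P ∈ R[X]_N := by
  rw [mem_degreeLT, degree_lt_iff_coeff_zero]
  intro m hm
  rw [coeff_sub, coeff_C_mul]
  obtain rfl | hlt := hm.eq_or_lt
  · rw [← hPN, hP.coeff_natDegree, mul_one, sub_self]
  · rw [coeff_eq_zero_of_degree_lt (hF.trans_lt (by exact_mod_cast hlt)),
      coeff_eq_zero_of_natDegree_lt (p := P) (hPN ▸ hlt), mul_zero, sub_zero]

section PhiQuot

variable {K : Type*} [Field K] {n M : ℕ} (z : Fin n → K)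

theorem monic_prod_X_sub_C_pow : (∏ a : Fin n, (X - C (z a)) ^ M).Monic :=
  monic_prod_of_monic _ _ fun _ _ => (monic_X_sub_C _).pow M

theorem natDegree_prod_X_sub_C_pow : (∏ a : Fin n, (X - C (z a)) ^ M).natDegree = M * n := by
  rw [natDegree_prod_of_monic _ _ fun _ _ => (monic_X_sub_C _).pow M]
  simp [mul_comm]

theorem eval_prod_X_sub_C_pow (hM : 0 < M) (i : Fin n) :
    (∏ a : Fin n, (X - C (z a)) ^ M).eval (z i) = 0 := by
  rw [eval_prod]
  exact prod_eq_zero (mem_univ i) (by simp [zero_pow hM.ne'])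

theorem derivative_prod_X_sub_C_pow :
    derivative (∏ a : Fin n, (X - C (z a)) ^ M) = ∑ j, C (M : K) * phiQuot n M z j 1 := by
  rw [derivative_prod_finset]
  refine sum_congr rfl fun j _ => ?_
  rw [derivative_X_sub_C_pow, phiQuot]
  ring

theorem monic_phiQuot (j : Fin n) (r : ℕ) : (phiQuot n M z j r).Monic :=
  ((monic_X_sub_C _).pow _).mul (monic_prod_of_monic _ _ fun _ _ => (monic_X_sub_C _).pow M)

theorem natDegree_phiQuot (j : Fin n) (r : ℕ) :
    (phiQuot n M z j r).natDegree = (M - r) + M * (n - 1) := by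
  rw [phiQuot, ((monic_X_sub_C _).pow _).natDegree_mul
    (monic_prod_of_monic _ _ fun _ _ => (monic_X_sub_C _).pow M),
    natDegree_prod_of_monic _ _ fun _ _ => (monic_X_sub_C _).pow M]
  simp [card_erase_of_mem, mul_comm]

theorem phiQuot_mem_degreeLT (hM : 0 < M) (j : Fin n) {r : ℕ} (hr : 0 < r) :
    phiQuot n M z j r ∈ K[X]_(M * n) := by
  rw [mem_degreeLT, degree_eq_natDegree (monic_phiQuot z j r).ne_zero, natDegree_phiQuot]
  have := Nat.mul_sub_one M n
  have := Nat.le_mul_of_pos_right M j.pos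
  exact_mod_cast (by omega : (M - r) + M * (n - 1) < M * n)

theorem eval_phiQuot_of_ne (hM : 0 < M) {i j : Fin n} (hij : i ≠ j) (r : ℕ) :
    (phiQuot n M z j r).eval (z i) = 0 := by
  rw [phiQuot, eval_mul, eval_prod,
    prod_eq_zero (mem_erase.2 ⟨hij, mem_univ i⟩) (by simp [zero_pow hM.ne']), mul_zero]

theorem eval_phiQuot_self_of_lt (j : Fin n) {r : ℕ} (hr : r < M) :
    (phiQuot n M z j r).eval (z j) = 0 := by
  simp [phiQuot, zero_pow (Nat.sub_ne_zero_of_lt hr)]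

theorem eval_phiQuot_self_ne_zero (hz : Function.Injective z) (j : Fin n) :
    (phiQuot n M z j M).eval (z j) ≠ 0 := by
  simp only [phiQuot, Nat.sub_self, pow_zero, one_mul, eval_prod, eval_pow, eval_sub, eval_X,
    eval_C]
  exact prod_ne_zero_iff.2 fun a ha =>
    pow_ne_zero _ (sub_ne_zero.2 fun h => (mem_erase.1 ha).1 (hz h).symm)

theorem X_sub_C_pow_pred_dvd_phiQuot (i j : Fin n) :
    (X - C (z i)) ^ (M - 1) ∣ phiQuot n M z j 1 := by
  obtain rfl | hij := eq_or_ne i j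
  · exact dvd_mul_right _ _
  · exact (pow_dvd_pow _ (Nat.sub_le M 1)).trans <|
      (dvd_prod_of_mem (fun a => (X - C (z a)) ^ M) (mem_erase.2 ⟨hij, mem_univ i⟩)).mul_left _

theorem phiQuot_mem_span (j : Fin n) :
    phiQuot n M z j 1 ∈ Submodule.span K (Set.range fun i => phiQuot n M z i 1) :=
  Submodule.subset_span ⟨j, rfl⟩

theorem derivative_combination_mem_span {Q : Fin n → K[X]}
    (hQ : ∀ j, derivative (Q j) ∈ Submodule.span K (Set.range fun i => phiQuot n M z i 1))
    (c : K) (E : Fin n → K) :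
    derivative (C c * ∏ a : Fin n, (X - C (z a)) ^ M + ∑ j, C (E j) * Q j) ∈
      Submodule.span K (Set.range fun i => phiQuot n M z i 1) := by
  rw [derivative_add, derivative_C_mul, derivative_prod_X_sub_C_pow, derivative_sum]
  refine add_mem (C_mul_mem _ (sum_mem fun j _ => C_mul_mem _ (phiQuot_mem_span z j)))
    (sum_mem fun j _ => ?_)
  rw [derivative_C_mul]
  exact C_mul_mem _ (hQ j)

theorem eq_zero_of_derivative_mem_span_phiQuot
    (hchar : ∀ m : ℕ, 1 ≤ m → m ≤ M → (m : K) ≠ 0) (hz : Function.Injective z) {G : K[X]}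
    (hdeg : G.degree < (M * n : ℕ))
    (heval : ∀ i, G.eval (z i) = 0)
    (hder : derivative G ∈ Submodule.span K (Set.range fun i => phiQuot n M z i 1)) :
    G = 0 := by
  have hdvd (i : Fin n) : (X - C (z i)) ^ M ∣ G :=
    X_sub_C_pow_dvd_of_dvd_derivative hchar
      (dvd_of_mem_span (X_sub_C_pow_pred_dvd_phiQuot z i) hder) (heval i)
  have hprod : ∏ a, (X - C (z a)) ^ M ∣ G :=
    Fintype.prod_dvd_of_coprime (fun i j hij => (pairwise_coprime_X_sub_C hz hij).pow) hdvd
  refine eq_zero_of_dvd_of_degree_lt hprod ?_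
  rwa [degree_eq_natDegree (monic_prod_X_sub_C_pow z).ne_zero, natDegree_prod_X_sub_C_pow]

end PhiQuot

section QPoly

variable {K : Type*} [Field K] {n M : ℕ} (z : Fin n → K)

/-- The shape of `Q_j`, with `B m` in the role of `A_{j,m+1}`. -/
noncomputable def qPoly (j : Fin n) (B : Fin (M - 1) → K) : K[X] :=
  phiQuot n M z j M + ∑ m : Fin (M - 1), C (B m) * phiQuot n M z j (m.1 + 1)

theorem qPoly_mem_degreeLT (hM : 0 < M) (j : Fin n) (B : Fin (M - 1) → K) :
    qPoly z j B ∈ K[X]_(M * n) :=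
  add_mem (phiQuot_mem_degreeLT z hM j hM) <|
    sum_mem fun m _ => C_mul_mem _ (phiQuot_mem_degreeLT z hM j m.1.succ_pos)

theorem eval_qPoly_self (j : Fin n) (B : Fin (M - 1) → K) :
    (qPoly z j B).eval (z j) = (phiQuot n M z j M).eval (z j) := by
  rw [qPoly, eval_add, eval_finsetSum, add_eq_left]
  exact sum_eq_zero fun m _ => by rw [eval_mul, eval_phiQuot_self_of_lt z j (by omega), mul_zero]

theorem eval_qPoly_of_ne (hM : 0 < M) {i j : Fin n} (hij : i ≠ j) (B : Fin (M - 1) → K) :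
    (qPoly z j B).eval (z i) = 0 := by
  simp [qPoly, eval_finsetSum, eval_phiQuot_of_ne z hM hij]

variable (B : Fin n → Fin (M - 1) → K)

theorem coeff_combination_qPoly (hM : 0 < M) (c : K) (E : Fin n → K) :
    (C c * ∏ a : Fin n, (X - C (z a)) ^ M + ∑ j, C (E j) * qPoly z j (B j)).coeff (M * n) =
      c := by
  have hq (j : Fin n) : (qPoly z j (B j)).coeff (M * n) = 0 :=
    coeff_eq_zero_of_degree_lt (mem_degreeLT.1 (qPoly_mem_degreeLT z hM j (B j)))
  have hΦ : (∏ a : Fin n, (X - C (z a)) ^ M).coeff (M * n) = 1 := by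
    rw [← natDegree_prod_X_sub_C_pow z, (monic_prod_X_sub_C_pow z).coeff_natDegree]
  simp [coeff_C_mul, finsetSum_coeff, hΦ, hq]

theorem eval_combination_qPoly (hM : 0 < M) (c : K) (E : Fin n → K) (i : Fin n) :
    (C c * ∏ a : Fin n, (X - C (z a)) ^ M + ∑ j, C (E j) * qPoly z j (B j)).eval (z i) =
      E i * (phiQuot n M z i M).eval (z i) := by
  rw [eval_add, eval_mul, eval_prod_X_sub_C_pow z hM, mul_zero, zero_add, eval_finsetSum,
    sum_eq_single i (fun j _ hji => by rw [eval_mul, eval_qPoly_of_ne z hM hji.symm, mul_zero])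
      (fun h => absurd (mem_univ i) h), eval_mul, eval_C, eval_qPoly_self]

end QPoly

theorem stmt13_general (K : Type*) [Field K] (n M : ℕ) (hM : 0 < M)
    (hchar : ∀ m : ℕ, 1 ≤ m → m ≤ M → (m : K) ≠ 0)
    (z : Fin n → K) (hz : Function.Injective z)
    (Q : Fin n → K[X])
    (hQform : ∀ j, ∃ A : Fin (M - 1) → K,
      Q j = phiQuot n M z j M +
        ∑ m : Fin (M - 1), C (A m) * phiQuot n M z j (m.1 + 1))
    (hQder : ∀ j, derivative (Q j)
      ∈ Submodule.span K (Set.range fun i : Fin n => phiQuot n M z i 1))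
    (F : K[X]) (hF : F.degree ≤ (M * n : ℕ))
    (A : Fin n → K)
    (hdF : derivative F = ∑ j : Fin n, C (A j) * phiQuot n M z j 1) :
    ∃! Dc : K × (Fin n → K),
      F = C Dc.1 * ∏ a : Fin n, (X - C (z a)) ^ M +
        ∑ j : Fin n, C (Dc.2 j) * Q j := by
  choose B hB using hQform
  obtain rfl : Q = fun j => qPoly z j (B j) := funext hB
  beta_reduce at hQder ⊢
  have hw := eval_phiQuot_self_ne_zero (M := M) z hz
  refine ⟨(F.coeff (M * n), fun j => F.eval (z j) / (phiQuot n M z j M).eval (z j)), ?_, ?_⟩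
  · dsimp only
    rw [← sub_eq_zero]
    refine eq_zero_of_derivative_mem_span_phiQuot z hchar hz ?_ (fun i => ?_) ?_
    · rw [sub_add_eq_sub_sub, ← mem_degreeLT]
      exact sub_mem (sub_C_coeff_mul_mem_degreeLT hF (monic_prod_X_sub_C_pow z)
        (natDegree_prod_X_sub_C_pow z))
        (sum_mem fun j _ => C_mul_mem _ (qPoly_mem_degreeLT z hM j _))
    · rw [eval_sub, eval_combination_qPoly z B hM, div_mul_cancel₀ _ (hw i), sub_self]
    · rw [derivative_sub, hdF]
      exact sub_mem (sum_mem fun j _ => C_mul_mem _ (phiQuot_mem_span z j))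
        (derivative_combination_mem_span z hQder _ _)
  · rintro ⟨c, E⟩ hcE
    refine Prod.ext ?_ (funext fun i => ?_) <;> dsimp only at hcE ⊢ <;> rw [hcE]
    · exact (coeff_combination_qPoly z B hM c E).symm
    · rw [eval_combination_qPoly z B hM, mul_div_cancel_right₀ _ (hw i)]

/-- If `F` has degree ≤ Mn and `F' = Σ_j A_j·Φ/(x−z_j)`, then `F`
is uniquely a linear combination `F = D_0·Φ + Σ_j D_j·Q_j`, where the `Q_j` are
the polynomials `Φ/(x−z_j)^M + Σ_{m=1}^{M−1} A_{j,m}·Φ/(x−z_j)^m` whose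
derivatives lie in the span of the `Φ/(x−z_i)`. -/
theorem stmt13 (K : Type*) [Field K] (n M : ℕ) (hn : 0 < n) (hM : 0 < M)
    (hchar : ∀ m : ℕ, 1 ≤ m → m ≤ M → (m : K) ≠ 0)
    (z : Fin n → K) (hz : Function.Injective z)
    (Q : Fin n → K[X])
    (hQform : ∀ j, ∃ A : Fin (M - 1) → K,
      Q j = phiQuot n M z j M +
        ∑ m : Fin (M - 1), C (A m) * phiQuot n M z j (m.1 + 1))
    (hQder : ∀ j, derivative (Q j)
      ∈ Submodule.span K (Set.range fun i : Fin n => phiQuot n M z i 1))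
    (F : K[X]) (hF : F.degree ≤ (M * n : ℕ))
    (A : Fin n → K)
    (hdF : derivative F = ∑ j : Fin n, C (A j) * phiQuot n M z j 1) :
    ∃! Dc : K × (Fin n → K),
      F = C Dc.1 * ∏ a : Fin n, (X - C (z a)) ^ M +
        ∑ j : Fin n, C (Dc.2 j) * Q j :=
  stmt13_general K n M hM hchar z hz Q hQform hQder F hF A hdF
end

section
/- Fix i with 1 ≤ i ≤ n and distinct z_1,...,z_n in a field where 2 is invertible, let M = 2 and Φ(x)=∏_{a=1}^n(x−z_a)^2, C_{i,l} = 2·Σ_{j≠i}(z_j−z_i)^{−l}, D_{i,l}(x) = 2·Σ_{j≠i}(z_j−z_i)^{−l}·Φ(x)/(x−z_j). Then (d/dx)(Φ/(x−z_i)^2 + C_{i,1}·Φ/(x−z_i)) = (D_{i,2} − C_{i,2}·Φ/(x−z_i)) + C_{i,1}·(D_{i,1} − C_{i,1}·Φ/(x−z_i)). -/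
/-!
Write `P = Φ/(x−z_i)²`. Since `(x−z_i) − (x−z_j) = z_j − z_i`, the `j`-th terms of
`D_{i,l+1}` and of `C_{i,l+1}·Φ/(x−z_i)` differ by
`2(z_j−z_i)^{−l}(x−z_i)(x−z_j)∏_{a≠i,j}(x−z_a)²`. Summed over `j`, this is `(x−z_i)P'` for
`l = 0` and `P' + C_{i,1}P` for `l = 1`, and the claim is the product rule for `P + C_{i,1}(x−z_i)P`.
-/

open Polynomial Finset

/-- `Φ(x)/(x−z_i)^r` for `M = 2`: the exponent of `(x − z_i)` is lowered by `r`. -/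
noncomputable def phiQuot2 {K : Type*} [Field K] (n : ℕ) (z : Fin n → K)
    (i : Fin n) (r : ℕ) : K[X] :=
  (X - C (z i)) ^ (2 - r) * ∏ a ∈ univ.erase i, (X - C (z a)) ^ 2

/-- `C_{i,l} = 2·Σ_{j≠i} (z_j − z_i)^{−l}`. -/
noncomputable def Ci2 {K : Type*} [Field K] (n : ℕ) (z : Fin n → K)
    (i : Fin n) (l : ℕ) : K :=
  2 * ∑ j ∈ univ.erase i, ((z j - z i) ^ l)⁻¹

/-- `D_{i,l} = 2·Σ_{j≠i} (z_j − z_i)^{−l}·Φ/(x−z_j)`. -/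
noncomputable def Di2 {K : Type*} [Field K] (n : ℕ) (z : Fin n → K)
    (i : Fin n) (l : ℕ) : K[X] :=
  2 • ∑ j ∈ univ.erase i, C (((z j - z i) ^ l)⁻¹) * phiQuot2 n z j 1

theorem derivative_prod_X_sub_C_sq {R ι : Type*} [CommRing R] [DecidableEq ι] (s : Finset ι)
    (z : ι → R) :
    derivative (∏ a ∈ s, (X - C (z a)) ^ 2) =
      ∑ j ∈ s, 2 * (X - C (z j)) * ∏ a ∈ s.erase j, (X - C (z a)) ^ 2 := by
  rw [derivative_prod_finset]
  refine sum_congr rfl fun j _ => ?_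
  rw [derivative_X_sub_C_sq, mul_comm, map_ofNat]

section

variable {K : Type*} [Field K] {n : ℕ} (z : Fin n → K) (i : Fin n)

theorem phiQuot2_two : phiQuot2 n z i 2 = ∏ a ∈ univ.erase i, (X - C (z a)) ^ 2 := by
  simp [phiQuot2]

theorem phiQuot2_one :
    phiQuot2 n z i 1 = (X - C (z i)) * ∏ a ∈ univ.erase i, (X - C (z a)) ^ 2 := by
  simp [phiQuot2]

theorem phiQuot2_one_of_ne {j : Fin n} (hji : j ≠ i) :
    phiQuot2 n z j 1 =
      (X - C (z j)) * (X - C (z i)) ^ 2 * ∏ a ∈ (univ.erase i).erase j, (X - C (z a)) ^ 2 := by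
  rw [phiQuot2_one, erase_right_comm, mul_assoc,
    mul_prod_erase _ (fun a => (X - C (z a)) ^ 2) (mem_erase.mpr ⟨hji.symm, mem_univ i⟩)]

theorem Di2_succ_sub_Ci2_mul_phiQuot2_one (hz : Function.Injective z) (l : ℕ) :
    Di2 n z i (l + 1) - C (Ci2 n z i (l + 1)) * phiQuot2 n z i 1 =
      ∑ j ∈ univ.erase i, C (2 * ((z j - z i) ^ l)⁻¹) *
        ((X - C (z i)) * (X - C (z j)) * ∏ a ∈ (univ.erase i).erase j, (X - C (z a)) ^ 2) := by
  rw [Di2, Ci2, map_mul, map_sum, mul_assoc, sum_mul, mul_sum, smul_sum, ← sum_sub_distrib]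
  refine sum_congr rfl fun j hj => ?_
  have hji : j ≠ i := (mem_erase.mp hj).1
  have hd : z j - z i ≠ 0 := sub_ne_zero.mpr fun h => hji (hz h)
  have hQ : X - C (z i) = (X - C (z j)) + C (z j - z i) := by rw [map_sub]; ring
  have hinv : C ((z j - z i) ^ (l + 1))⁻¹ * C (z j - z i) = C ((z j - z i) ^ l)⁻¹ := by
    rw [← map_mul, pow_succ, mul_inv, mul_assoc, inv_mul_cancel₀ hd, mul_one]
  rw [phiQuot2_one_of_ne z i hji, phiQuot2_one,
    ← mul_prod_erase _ (fun a => (X - C (z a)) ^ 2) hj, map_mul, map_ofNat,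
    nsmul_eq_mul, Nat.cast_ofNat]
  set R := ∏ a ∈ (univ.erase i).erase j, (X - C (z a)) ^ 2
  linear_combination (2 * C ((z j - z i) ^ (l + 1))⁻¹ * (X - C (z j)) * (X - C (z i)) * R) * hQ
    + (2 * (X - C (z j)) * (X - C (z i)) * R) * hinv

theorem Di2_one_sub_Ci2_mul_phiQuot2_one (hz : Function.Injective z) :
    Di2 n z i 1 - C (Ci2 n z i 1) * phiQuot2 n z i 1 =
      (X - C (z i)) * derivative (∏ a ∈ univ.erase i, (X - C (z a)) ^ 2) := by
  rw [Di2_succ_sub_Ci2_mul_phiQuot2_one z i hz 0, derivative_prod_X_sub_C_sq, mul_sum]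
  refine sum_congr rfl fun j _ => ?_
  simp only [pow_zero, inv_one, mul_one, map_ofNat]
  ring

theorem Di2_two_sub_Ci2_mul_phiQuot2_one (hz : Function.Injective z) :
    Di2 n z i 2 - C (Ci2 n z i 2) * phiQuot2 n z i 1 =
      derivative (∏ a ∈ univ.erase i, (X - C (z a)) ^ 2) +
        C (Ci2 n z i 1) * ∏ a ∈ univ.erase i, (X - C (z a)) ^ 2 := by
  rw [Di2_succ_sub_Ci2_mul_phiQuot2_one z i hz 1, derivative_prod_X_sub_C_sq, Ci2, map_mul,
    map_sum, mul_assoc, sum_mul, mul_sum, ← sum_add_distrib]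
  refine sum_congr rfl fun j hj => ?_
  have hd : z j - z i ≠ 0 := sub_ne_zero.mpr fun h => (mem_erase.mp hj).1 (hz h)
  have hQ : X - C (z i) = (X - C (z j)) + C (z j - z i) := by rw [map_sub]; ring
  have hinv : C (z j - z i)⁻¹ * C (z j - z i) = 1 := by
    rw [← map_mul, inv_mul_cancel₀ hd, map_one]
  rw [← mul_prod_erase _ (fun a => (X - C (z a)) ^ 2) hj, pow_one, map_mul, map_ofNat]
  set R := ∏ a ∈ (univ.erase i).erase j, (X - C (z a)) ^ 2
  linear_combination (2 * C (z j - z i)⁻¹ * (X - C (z j)) * R) * hQ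
    + (2 * (X - C (z j)) * R) * hinv

end

theorem stmt17_general (K : Type*) [Field K] (n : ℕ)
    (z : Fin n → K) (hz : Function.Injective z) (i : Fin n) :
    derivative (phiQuot2 n z i 2 + C (Ci2 n z i 1) * phiQuot2 n z i 1)
      = (Di2 n z i 2 - C (Ci2 n z i 2) * phiQuot2 n z i 1) +
        C (Ci2 n z i 1) *
          (Di2 n z i 1 - C (Ci2 n z i 1) * phiQuot2 n z i 1) := by
  rw [Di2_two_sub_Ci2_mul_phiQuot2_one z i hz, Di2_one_sub_Ci2_mul_phiQuot2_one z i hz,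
    phiQuot2_two, phiQuot2_one, derivative_add, derivative_C_mul, derivative_mul,
    derivative_X_sub_C]
  ring

/-- for `M = 2` over a field where `2` is invertible,
`(Φ/(x−z_i)² + C_{i,1}·Φ/(x−z_i))'
  = (D_{i,2} − C_{i,2}·Φ/(x−z_i)) + C_{i,1}·(D_{i,1} − C_{i,1}·Φ/(x−z_i))`. -/
theorem stmt17 (K : Type*) [Field K] (h2 : (2 : K) ≠ 0) (n : ℕ) (hn : 0 < n)
    (z : Fin n → K) (hz : Function.Injective z) (i : Fin n) :
    derivative (phiQuot2 n z i 2 + C (Ci2 n z i 1) * phiQuot2 n z i 1)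
      = (Di2 n z i 2 - C (Ci2 n z i 2) * phiQuot2 n z i 1) +
        C (Ci2 n z i 1) *
          (Di2 n z i 1 - C (Ci2 n z i 1) * phiQuot2 n z i 1) :=
  stmt17_general K n z hz i
end

section
/- For the KZ system over F_p(z), the annihilator of the span of the arithmetic solutions is isomorphic to Ω_log ∩ ∂(F_p(z)[x]_{≤Mn}): a covector (c_1(z),...,c_n(z)) ∈ F_p(z)^n satisfies Σ_j c_j(z)·P_j^{lp−1}(z) = 0 for all l = 1,...,ak if and only if there exists a polynomial Q(x,z) ∈ F_p(z)[x] with ∂Q/∂x = Σ_{j=1}^n c_j(z)·Φ(x,z)/(x−z_j). -/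
/-!
Differentiation multiplies the coefficient of `x^(i+1)` by `i + 1`, which vanishes in `𝔽_p(z)`
exactly when `p ∣ i + 1`; so a polynomial is an `x`-derivative iff its coefficients at the powers
`x^(lp-1)` vanish. The coefficient of `x^(lp-1)` in `∑ c_j Φ/(x - z_j)` is `∑ c_j P_j^(lp-1)`, and
for `l > ak` it vanishes for degree reasons: `Φ/(x - z_j)` has degree `nM - 1 = kqM + M - 1`,
and `qM ≤ ap - 1`, `M < p` make this smaller than `(ak+1)p - 1`.
-/

open Polynomial Finset

namespace Polynomial

variable {K : Type*} [Field K]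

theorem exists_derivative_eq_iff (F : K[X]) :
    (∃ Q : K[X], derivative Q = F) ↔ ∀ i : ℕ, (i + 1 : K) = 0 → F.coeff i = 0 := by
  constructor
  · rintro ⟨Q, rfl⟩ i hi
    rw [coeff_derivative, hi, mul_zero]
  · intro h
    refine ⟨∑ i ∈ range (F.natDegree + 1), C (F.coeff i / (i + 1)) * X ^ (i + 1), ?_⟩
    conv_rhs => rw [F.as_sum_range_C_mul_X_pow]
    rw [derivative_sum]
    refine sum_congr rfl fun i _ => ?_
    rw [derivative_C_mul, derivative_X_pow, Nat.add_sub_cancel, Nat.cast_add, Nat.cast_one,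
      ← mul_assoc, ← C_mul]
    by_cases hi : (i + 1 : K) = 0
    · rw [hi, h i hi, zero_div, zero_mul]
    · rw [div_mul_cancel₀ _ hi]

theorem exists_derivative_eq_iff_coeff_mul_sub_one (p : ℕ) [CharP K p] (hp : p ≠ 0)
    (F : K[X]) :
    (∃ Q : K[X], derivative Q = F) ↔ ∀ l : ℕ, 1 ≤ l → F.coeff (l * p - 1) = 0 := by
  rw [exists_derivative_eq_iff]
  have hcast (i : ℕ) : (i + 1 : K) = 0 ↔ p ∣ i + 1 := by
    rw [← CharP.cast_eq_zero_iff K p, Nat.cast_succ]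
  refine ⟨fun h l hl => h _ ((hcast _).2 ⟨l, ?_⟩), fun h i hi => ?_⟩
  · have := Nat.mul_pos hl (Nat.pos_of_ne_zero hp)
    rw [Nat.mul_comm p l]; omega
  · obtain ⟨l, hl⟩ := (hcast i).1 hi
    have hl1 : 1 ≤ l := Nat.pos_of_ne_zero (by rintro rfl; simp at hl)
    convert h l hl1
    rw [mul_comm]; omega

end Polynomial

theorem natDegree_phiQuot_le {K : Type*} [Field K] (n M : ℕ) (z : Fin n → K) (i : Fin n)
    (r : ℕ) : (phiQuot n M z i r).natDegree ≤ (M - r) + (n - 1) * M := by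
  have hpow (a : Fin n) (m : ℕ) : ((X - C (z a)) ^ m).natDegree = m := by
    rw [natDegree_pow, natDegree_X_sub_C, mul_one]
  refine natDegree_mul_le.trans (add_le_add (hpow i _).le ((natDegree_prod_le _ _).trans ?_))
  simp [hpow, card_erase_of_mem]

theorem coeff_phiQuot_mul_sub_one_eq_zero {K : Type*} [Field K] {p q n k a M l : ℕ} (hp : 2 ≤ p)
    (hn : n = k * q + 1) (ha : a < q) (hM : M = (a * p - 1) / q) (z : Fin n → K) (j : Fin n)
    (hl : a * k < l) : (phiQuot n M z j 1).coeff (l * p - 1) = 0 := by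
  have hMq : M * q ≤ a * p - 1 := by rw [hM]; exact Nat.div_mul_le_self _ _
  have hMp : M < p := by
    have hap : a * p < q * p := Nat.mul_lt_mul_of_pos_right ha (by omega)
    exact Nat.lt_of_mul_lt_mul_left (a := q) (by rw [mul_comm q M]; omega)
  have hkqM : (n - 1) * M ≤ k * (a * p) := by
    rw [hn, Nat.add_sub_cancel, mul_assoc]
    exact Nat.mul_le_mul_left k (by rw [mul_comm q M]; omega)
  have hlp : (a * k + 1) * p ≤ l * p := Nat.mul_le_mul_right p hl
  apply coeff_eq_zero_of_natDegree_lt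
  refine (natDegree_phiQuot_le n M z j 1).trans_lt ?_
  rw [add_mul, one_mul, mul_comm a k, mul_assoc] at hlp
  omega

theorem stmt19_general (p q n k a M : ℕ) [Fact p.Prime]
    (hn : n = k * q + 1)
    (ha2 : a < q)
    (hM : M = (a * p - 1) / q)
    (z : Fin n → FractionRing (MvPolynomial (Fin n) (ZMod p)))
    (c : Fin n → FractionRing (MvPolynomial (Fin n) (ZMod p))) :
    (∀ l : ℕ, 1 ≤ l → l ≤ a * k →
        ∑ j : Fin n, c j * (phiQuot n M z j 1).coeff (l * p - 1) = 0)
      ↔ ∃ Q : (FractionRing (MvPolynomial (Fin n) (ZMod p)))[X],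
          derivative Q = ∑ j : Fin n, C (c j) * phiQuot n M z j 1 := by
  have hp : p.Prime := Fact.out
  rw [exists_derivative_eq_iff_coeff_mul_sub_one p hp.ne_zero]
  simp only [finsetSum_coeff, coeff_C_mul]
  refine ⟨fun h l hl => ?_, fun h l hl _ => h l hl⟩
  rcases le_or_gt l (a * k) with hlk | hlk
  · exact h l hl hlk
  · simp [coeff_phiQuot_mul_sub_one_eq_zero hp.two_le hn ha2 hM z _ hlk]

/-- For the KZ system over `𝔽_p(z)` (with `n = kq+1`, `p > n`,
`p > q`, `1 ≤ a < q`, `q ∣ ap−1`, `M = (ap−1)/q`), a covector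
`(c_1,…,c_n) ∈ 𝔽_p(z)^n` annihilates all arithmetic solutions
`P^{lp−1} = ((Φ/(x−z_j)).coeff (lp−1))_j`, `l = 1,…,ak`, if and only if
`Σ_j c_j·Φ(x,z)/(x−z_j)` is the `x`-derivative of some `Q ∈ 𝔽_p(z)[x]`. -/
theorem stmt19 (p q n k a M : ℕ) [Fact p.Prime] (hq : q.Prime)
    (hk : 0 < k) (hn : n = k * q + 1) (hpn : p > n) (hpq : p > q)
    (ha1 : 1 ≤ a) (ha2 : a < q) (hdvd : q ∣ (a * p - 1))
    (hM : M = (a * p - 1) / q)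
    (z : Fin n → FractionRing (MvPolynomial (Fin n) (ZMod p)))
    (hzdef : z = fun j => algebraMap (MvPolynomial (Fin n) (ZMod p)) _
      (MvPolynomial.X j))
    (c : Fin n → FractionRing (MvPolynomial (Fin n) (ZMod p))) :
    (∀ l : ℕ, 1 ≤ l → l ≤ a * k →
        ∑ j : Fin n, c j * (phiQuot n M z j 1).coeff (l * p - 1) = 0)
      ↔ ∃ Q : (FractionRing (MvPolynomial (Fin n) (ZMod p)))[X],
          derivative Q = ∑ j : Fin n, C (c j) * phiQuot n M z j 1 :=
  stmt19_general p q n k a M hn ha2 hM z c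
end
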